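/- A unit vector ψ ∈ ℂ^{ℤ₃ⁿ} is an n-qutrit stabilizer state if and only if there exists a Clifford unitary U with ψ = U|0⟩^{⊗n}, where |0⟩^{⊗n} is the computational basis vector indexed by the zero tuple. -/

import Mathlib

open Real

/-- `ω = e^{2πi/3}`. -/
noncomputable def omega3 : ℂ := Complex.exp (2 * (π : ℂ) * Complex.I / 3)

/-- The matrix `XZ(v,w) = X^{v₁}Z^{w₁}⊗⋯⊗X^{vₙ}Z^{wₙ}` on `n` qutrits:
its `(y,x)` entry is `ω^{Σⱼ wⱼxⱼ}` if `y = x + v` and `0` otherwise. -/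
noncomputable def pauliXZ (n : ℕ) (v w : Fin n → ZMod 3) :
    Matrix (Fin n → ZMod 3) (Fin n → ZMod 3) ℂ :=
  Matrix.of fun y x => if y = x + v then omega3 ^ ((∑ j, w j * x j : ZMod 3).val) else 0

/-- The generalized Pauli group `𝒫ₙ` on `n` qutrits (as a set of matrices). -/
noncomputable def PauliGroup (n : ℕ) :
    Set (Matrix (Fin n → ZMod 3) (Fin n → ZMod 3) ℂ) :=
  { M | ∃ (δ : ZMod 3) (v w : Fin n → ZMod 3), M = omega3 ^ δ.val • pauliXZ n v w }

namespace StabAux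

/-- the basic character of `ZMod 3`. -/
noncomputable def om (a : ZMod 3) : ℂ := omega3 ^ a.val

lemma omega3_pow_three : omega3 ^ 3 = 1 := by
  rw [omega3, ← Complex.exp_nat_mul]
  rw [show ((3:ℕ):ℂ) * (2 * (π:ℂ) * Complex.I / 3) = 2 * π * Complex.I by push_cast; ring,
    Complex.exp_two_pi_mul_I]

lemma omega3_ne_zero : omega3 ≠ 0 := Complex.exp_ne_zero _

lemma omega3_ne_one : omega3 ≠ 1 := by
  have h : omega3 = Complex.exp ((2*π/3 : ℝ) * Complex.I) := by
    rw [omega3]; congr 1; push_cast; ring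
  intro h1
  have him : omega3.im = Real.sin (2*π/3) := by rw [h, Complex.exp_ofReal_mul_I_im]
  have hpos : 0 < Real.sin (2*π/3) := by
    apply Real.sin_pos_of_pos_of_lt_pi
    · positivity
    · nlinarith [Real.pi_pos]
  rw [h1] at him
  simp at him
  rw [← him] at hpos
  exact lt_irrefl _ hpos

lemma omega3_sq_ne_one : omega3 ^ 2 ≠ 1 := by
  intro h
  have : omega3 = 1 := by
    have h4 : omega3 ^ 4 = omega3 := by
      rw [show (4:ℕ) = 3 + 1 by rfl, pow_add, omega3_pow_three, one_mul, pow_one]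
    calc omega3 = omega3 ^ 4 := h4.symm
    _ = (omega3 ^ 2) ^ 2 := by ring
    _ = 1 := by rw [h]; ring
  exact omega3_ne_one this

lemma omega3_sum : 1 + omega3 + omega3 ^ 2 = 0 := by
  have h : (omega3 - 1) * (omega3 ^ 2 + omega3 + 1) = 0 := by
    have : (omega3 - 1) * (omega3 ^ 2 + omega3 + 1) = omega3 ^ 3 - 1 := by ring
    rw [this, omega3_pow_three, sub_self]
  rcases mul_eq_zero.mp h with h1 | h2
  · exact absurd (sub_eq_zero.mp h1) omega3_ne_one
  · linear_combination h2

lemma pow_val_mod (m : ℕ) : omega3 ^ (m % 3) = omega3 ^ m := by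
  conv_rhs => rw [← Nat.div_add_mod m 3]
  rw [pow_add, pow_mul, omega3_pow_three, one_pow, one_mul]

lemma om_zero : om 0 = 1 := by simp [om]

lemma om_add (a b : ZMod 3) : om (a + b) = om a * om b := by
  rw [om, om, om, ZMod.val_add, pow_val_mod, pow_add]

lemma om_one' : om 1 = omega3 := by
  rw [om]; norm_num [ZMod.val_one]

lemma om_two : om 2 = omega3 ^ 2 := by
  rw [om]; congr 1

lemma om_ne_zero (a : ZMod 3) : om a ≠ 0 := pow_ne_zero _ omega3_ne_zero

lemma om_mul_om_neg (a : ZMod 3) : om a * om (-a) = 1 := by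
  rw [← om_add, add_neg_cancel, om_zero]

lemma om_eq_one_iff (a : ZMod 3) : om a = 1 ↔ a = 0 := by
  constructor
  · intro h
    have h3 : a = 0 ∨ a = 1 ∨ a = 2 := (by decide : ∀ a : ZMod 3, a = 0 ∨ a = 1 ∨ a = 2) a
    rcases h3 with rfl | rfl | rfl
    · rfl
    · rw [om_one'] at h; exact absurd h omega3_ne_one
    · rw [om_two] at h; exact absurd h omega3_sq_ne_one
  · rintro rfl; exact om_zero

lemma om_inj {a b : ZMod 3} (h : om a = om b) : a = b := by
  have : om (a - b) = 1 := by
    rw [sub_eq_add_neg, om_add, h, ← om_add, add_neg_cancel, om_zero]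
  have := (om_eq_one_iff _).mp this
  linear_combination this

lemma abs_om (a : ZMod 3) : ‖om a‖ = 1 := by
  rw [om, norm_pow]
  have : ‖omega3‖ = 1 := by
    rw [omega3, Complex.norm_exp]
    have : (2 * (π:ℂ) * Complex.I / 3).re = 0 := by simp
    rw [this, Real.exp_zero]
  rw [this, one_pow]

lemma conj_om (a : ZMod 3) : (starRingEnd ℂ) (om a) = om (-a) := by
  have h1 : (om a)⁻¹ = (starRingEnd ℂ) (om a) := Complex.inv_eq_conj (abs_om a)
  rw [← h1]
  exact inv_eq_of_mul_eq_one_right (om_mul_om_neg a)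

lemma sum_zmod3 (f : ZMod 3 → ℂ) : ∑ c, f c = f 0 + f 1 + f 2 := by
  have h : (Finset.univ : Finset (ZMod 3)) = {0, 1, 2} := by decide
  rw [h]
  rw [Finset.sum_insert (by decide), Finset.sum_insert (by decide),
    Finset.sum_singleton]
  ring

lemma om_sum (a : ZMod 3) : (∑ c : ZMod 3, om (a * c)) = if a = 0 then 3 else 0 := by
  have h3 : a = 0 ∨ a = 1 ∨ a = 2 := (by decide : ∀ a : ZMod 3, a = 0 ∨ a = 1 ∨ a = 2) a
  rcases h3 with rfl | rfl | rfl
  · simp [sum_zmod3, om_zero]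
  · rw [sum_zmod3, if_neg (by decide)]
    norm_num
    rw [om_zero, om_one', om_two]
    linear_combination omega3_sum
  · rw [sum_zmod3, if_neg (by decide)]
    norm_num
    rw [show (4 : ZMod 3) = 1 by decide, om_zero, om_one', om_two]
    linear_combination omega3_sum

lemma e_sum_eq_prod {ι : Type*} (s : Finset ι) (f : ι → ZMod 3) :
    om (∑ j ∈ s, f j) = ∏ j ∈ s, om (f j) := by
  classical
  induction s using Finset.induction with
  | empty => simp [om_zero]
  | insert a s' h ih =>
                   rw [Finset.sum_insert h, Finset.prod_insert h, om_add, ih]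

end StabAux
namespace StabAux

variable {n : ℕ}

abbrev G3 (n : ℕ) := Fin n → ZMod 3

noncomputable def mono (g : G3 n ≃ G3 n) (c : G3 n → ℂ) : Matrix (G3 n) (G3 n) ℂ :=
  Matrix.of fun y x => if y = g x then c x else 0

lemma mono_ext {g g' : G3 n ≃ G3 n} {c c' : G3 n → ℂ} (hg : ∀ x, g x = g' x)
    (hc : ∀ x, c x = c' x) : mono g c = mono g' c' := by
  ext y x; simp only [mono, Matrix.of_apply, hg, hc]

lemma mono_mul (g h : G3 n ≃ G3 n) (c d : G3 n → ℂ) :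
    mono g c * mono h d = mono (h.trans g) fun x => c (h x) * d x := by
  ext y x
  simp only [mono, Matrix.mul_apply, Matrix.of_apply]
  rw [Finset.sum_eq_single (h x)]
  · simp only [if_pos rfl, Equiv.trans_apply]
    by_cases hy : y = g (h x) <;> simp [hy]
  · intro z _ hz
    rw [if_neg hz, mul_zero]
  · intro hx; exact absurd (Finset.mem_univ _) hx

lemma mono_star (g : G3 n ≃ G3 n) (c : G3 n → ℂ) :
    star (mono g c) = mono g.symm fun x => (starRingEnd ℂ) (c (g.symm x)) := by
  ext y x
  simp only [mono, Matrix.star_apply, Matrix.of_apply]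
  by_cases h : x = g y
  · rw [if_pos h, if_pos (by rw [h, Equiv.symm_apply_apply]), h, Equiv.symm_apply_apply]
    rfl
  · rw [if_neg h, if_neg (fun hy => h (by rw [hy, Equiv.apply_symm_apply])), star_zero]

lemma smul_mono (a : ℂ) (g : G3 n ≃ G3 n) (c : G3 n → ℂ) :
    a • mono g c = mono g fun x => a * c x := by
  ext y x
  simp only [mono, Matrix.smul_apply, Matrix.of_apply, smul_eq_mul, mul_ite, mul_zero]

lemma mono_refl_one : mono (Equiv.refl (G3 n)) (fun _ => (1:ℂ)) = 1 := by
  ext y x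
  simp [mono, Matrix.one_apply]
  congr

/-- dot product notation shortcut -/
noncomputable def dotp (v w : G3 n) : ZMod 3 := dotProduct v w

lemma pauli_eq_mono (v w : G3 n) :
    pauliXZ n v w = mono (Equiv.addRight v) fun x => om (dotp w x) := rfl

lemma pauli_mul (v w v' w' : G3 n) :
    pauliXZ n v w * pauliXZ n v' w'
      = om (dotp w v') • pauliXZ n (v + v') (w + w') := by
  rw [pauli_eq_mono, pauli_eq_mono, pauli_eq_mono, mono_mul, smul_mono]
  apply mono_ext
  · intro x
    simp [Equiv.addRight]
    abel
  · intro x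
    rw [← om_add, ← om_add]
    congr 1
    simp only [dotp, Equiv.coe_addRight, dotProduct, Pi.add_apply, mul_add, add_mul,
      Finset.sum_add_distrib]
    ring

lemma pauli_star (v w : G3 n) :
    star (pauliXZ n v w) = om (dotp w v) • pauliXZ n (-v) (-w) := by
  rw [pauli_eq_mono, mono_star, pauli_eq_mono, smul_mono]
  apply mono_ext
  · intro x
    simp [Equiv.addRight, sub_eq_add_neg]
  · intro x
    rw [conj_om, ← om_add]
    congr 1
    have hs : (Equiv.addRight v).symm x = x + -v := by simp [Equiv.addRight, sub_eq_add_neg]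
    rw [hs]
    simp only [dotp, dotProduct, Pi.add_apply, Pi.neg_apply, mul_add, mul_neg,
      neg_mul, Finset.sum_add_distrib, Finset.sum_neg_distrib]
    ring

lemma pauli_zero_zero : pauliXZ n 0 0 = 1 := by
  rw [pauli_eq_mono]
  rw [show (mono (Equiv.addRight (0 : G3 n)) fun x => om (dotp 0 x))
      = mono (Equiv.refl _) (fun _ => (1:ℂ)) from
    mono_ext (by intro x; simp [Equiv.addRight]) (by intro x; simp [dotp, om_zero])]
  exact mono_refl_one

lemma dotp_zero_right (w : G3 n) : dotp w 0 = 0 := by simp [dotp]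
lemma dotp_zero_left (w : G3 n) : dotp 0 w = 0 := by simp [dotp]

lemma pauli_star_mul_self (v w : G3 n) : star (pauliXZ n v w) * pauliXZ n v w = 1 := by
  rw [pauli_star, Matrix.smul_mul, pauli_mul]
  rw [smul_smul, ← om_add]
  have h1 : dotp w v + dotp (-w) v = 0 := by
    simp [dotp, neg_dotProduct]
  rw [h1, om_zero, one_smul]
  simp only [neg_add_cancel]
  exact pauli_zero_zero

lemma pauli_unitary (v w : G3 n) : pauliXZ n v w ∈ unitary (Matrix (G3 n) (G3 n) ℂ) := by
  rw [Unitary.mem_iff]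
  constructor
  · exact pauli_star_mul_self v w
  · rw [mul_eq_one_comm]
    exact pauli_star_mul_self v w

lemma dotp_single (w : G3 n) (j : Fin n) : dotp w (Pi.single j 1) = w j := by
  simp only [dotp, dotProduct]
  rw [Finset.sum_eq_single j]
  · rw [Pi.single_eq_same, mul_one]
  · intro i _ hi; rw [Pi.single_apply, if_neg hi, mul_zero]
  · intro h; exact absurd (Finset.mem_univ _) h

lemma smul_pauli_apply (δ : ZMod 3) (v w y x : G3 n) :
    (om δ • pauliXZ n v w) y x = if y = x + v then om (δ + dotp w x) else 0 := by
  simp only [Matrix.smul_apply, pauliXZ, Matrix.of_apply, smul_eq_mul, mul_ite, mul_zero]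
  rw [om_add]
  rfl

/-- Uniqueness of the Pauli parameters. -/
lemma pauli_param_eq {δ δ' : ZMod 3} {v w v' w' : G3 n}
    (h : om δ • pauliXZ n v w = om δ' • pauliXZ n v' w') :
    δ = δ' ∧ v = v' ∧ w = w' := by
  have hvv : v = v' := by
    have h0 := congrFun (congrFun h v) 0
    rw [smul_pauli_apply, smul_pauli_apply, if_pos (by rw [zero_add])] at h0
    by_contra hne
    rw [if_neg (by rw [zero_add]; exact hne)] at h0
    exact om_ne_zero _ h0
  subst hvv
  have key : ∀ x : G3 n, om (δ + dotp w x) = om (δ' + dotp w' x) := by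
    intro x
    have h0 := congrFun (congrFun h (x + v)) x
    rw [smul_pauli_apply, smul_pauli_apply, if_pos rfl, if_pos rfl] at h0
    exact h0
  have hδ : δ = δ' := by
    have := key 0
    rw [dotp_zero_right, dotp_zero_right, add_zero, add_zero] at this
    exact om_inj this
  subst hδ
  refine ⟨rfl, rfl, ?_⟩
  funext j
  have := key (Pi.single j 1)
  rw [dotp_single, dotp_single] at this
  have := om_inj this
  exact add_left_cancel this

lemma pauli_inj {v w v' w' : G3 n} (h : pauliXZ n v w = pauliXZ n v' w') :
    v = v' ∧ w = w' := by
  have : om 0 • pauliXZ n v w = om 0 • pauliXZ n v' w' := by rw [h]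
  exact (pauli_param_eq this).2

end StabAux

/-- `ψ` is an `n`-qutrit stabilizer state: a unit vector admitting an abelian subgroup `S` of
the Pauli group of order `3ⁿ`, whose only scalar multiple of the identity is the identity,
with `sψ = ψ` for all `s ∈ S`. -/
noncomputable def IsStabilizerState (n : ℕ) (ψ : (Fin n → ZMod 3) → ℂ) : Prop :=
  (∑ x, Complex.normSq (ψ x)) = 1 ∧
  ∃ S : Subgroup (Matrix (Fin n → ZMod 3) (Fin n → ZMod 3) ℂ)ˣ,
    Nat.card S = 3 ^ n ∧
    (∀ A ∈ S, ∀ B ∈ S, A * B = B * A) ∧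
    (∀ A ∈ S, (A : Matrix (Fin n → ZMod 3) (Fin n → ZMod 3) ℂ) ∈ PauliGroup n) ∧
    (∀ A ∈ S, ∀ c : ℂ,
      (A : Matrix (Fin n → ZMod 3) (Fin n → ZMod 3) ℂ) = c • 1 →
      (A : Matrix (Fin n → ZMod 3) (Fin n → ZMod 3) ℂ) = 1) ∧
    (∀ A ∈ S, (A : Matrix (Fin n → ZMod 3) (Fin n → ZMod 3) ℂ).mulVec ψ = ψ)

/-- `U` is an `n`-qutrit Clifford unitary: `U` is unitary and conjugation by `U` maps the
generalized Pauli group onto itself. -/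
noncomputable def IsClifford (n : ℕ)
    (U : Matrix (Fin n → ZMod 3) (Fin n → ZMod 3) ℂ) : Prop :=
  U ∈ unitary (Matrix (Fin n → ZMod 3) (Fin n → ZMod 3) ℂ) ∧
  (fun P => U * P * star U) '' PauliGroup n = PauliGroup n

namespace StabAux

variable {n : ℕ}

lemma mem_pauliGroup_iff {M : Matrix (G3 n) (G3 n) ℂ} :
    M ∈ PauliGroup n ↔ ∃ δ v w, M = om δ • pauliXZ n v w := Iff.rfl

lemma pauliGroup_finite : (PauliGroup n).Finite := by
  have h : PauliGroup n =
      Set.range (fun t : ZMod 3 × G3 n × G3 n => om t.1 • pauliXZ n t.2.1 t.2.2) := by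
    ext M
    constructor
    · rintro ⟨δ, v, w, rfl⟩; exact ⟨(δ, v, w), rfl⟩
    · rintro ⟨⟨δ, v, w⟩, rfl⟩; exact ⟨δ, v, w, rfl⟩
  rw [h]
  exact Set.finite_range _

lemma conj_cancel {U : Matrix (G3 n) (G3 n) ℂ}
    (hU : U ∈ unitary (Matrix (G3 n) (G3 n) ℂ)) (P : Matrix (G3 n) (G3 n) ℂ) :
    star U * (U * P * star U) * U = P := by
  have h1 : star U * U = 1 := (Unitary.mem_iff.mp hU).1
  calc star U * (U * P * star U) * U = (star U * U) * P * (star U * U) := by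
        simp only [Matrix.mul_assoc]
    _ = P := by rw [h1, one_mul, mul_one]

lemma conj_inj {U : Matrix (G3 n) (G3 n) ℂ}
    (hU : U ∈ unitary (Matrix (G3 n) (G3 n) ℂ)) :
    Function.Injective (fun P => U * P * star U) := by
  intro P Q h
  simp only at h
  have hP := conj_cancel hU P
  have hQ := conj_cancel hU Q
  rw [← hP, ← hQ, h]

lemma clifford_of_mapsTo {U : Matrix (G3 n) (G3 n) ℂ}
    (hU : U ∈ unitary (Matrix (G3 n) (G3 n) ℂ))
    (h : ∀ P ∈ PauliGroup n, U * P * star U ∈ PauliGroup n) : IsClifford n U := by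
  refine ⟨hU, ?_⟩
  have hsub : (fun P => U * P * star U) '' PauliGroup n ⊆ PauliGroup n := by
    rintro _ ⟨P, hP, rfl⟩; exact h P hP
  apply Set.eq_of_subset_of_ncard_le hsub ?_ pauliGroup_finite
  rw [Set.ncard_image_of_injective _ (conj_inj hU)]

lemma clifford_conj_mem {U : Matrix (G3 n) (G3 n) ℂ} (h : IsClifford n U)
    {P : Matrix (G3 n) (G3 n) ℂ} (hP : P ∈ PauliGroup n) :
    U * P * star U ∈ PauliGroup n := by
  rw [← h.2]
  exact Set.mem_image_of_mem _ hP

lemma clifford_conj_mem' {U : Matrix (G3 n) (G3 n) ℂ} (h : IsClifford n U)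
    {P : Matrix (G3 n) (G3 n) ℂ} (hP : P ∈ PauliGroup n) :
    star U * P * U ∈ PauliGroup n := by
  rw [← h.2] at hP
  obtain ⟨Q, hQ, rfl⟩ := hP
  rw [conj_cancel h.1]
  exact hQ

lemma clifford_star {U : Matrix (G3 n) (G3 n) ℂ} (h : IsClifford n U) :
    IsClifford n (star U) := by
  apply clifford_of_mapsTo (Unitary.star_mem h.1)
  intro P hP
  rw [star_star]
  exact clifford_conj_mem' h hP

lemma clifford_mul {U V : Matrix (G3 n) (G3 n) ℂ} (hU : IsClifford n U)
    (hV : IsClifford n V) : IsClifford n (U * V) := by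
  apply clifford_of_mapsTo (mul_mem hU.1 hV.1)
  intro P hP
  have h : (U * V) * P * star (U * V) = U * (V * P * star V) * star U := by
    rw [StarMul.star_mul]
    simp only [Matrix.mul_assoc]
  rw [h]
  exact clifford_conj_mem hU (clifford_conj_mem hV hP)

lemma clifford_smul {U : Matrix (G3 n) (G3 n) ℂ} (c : ℂ)
    (hc : (starRingEnd ℂ) c * c = 1) (h : IsClifford n U) : IsClifford n (c • U) := by
  have h1 := (Unitary.mem_iff.mp h.1).1
  have h2 := (Unitary.mem_iff.mp h.1).2
  have hc' : c * (starRingEnd ℂ) c = 1 := by rw [mul_comm]; exact hc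
  constructor
  · rw [Unitary.mem_iff]
    constructor
    · rw [star_smul, Matrix.smul_mul, Matrix.mul_smul, smul_smul, h1, Complex.star_def, hc,
        one_smul]
    · rw [star_smul, Matrix.smul_mul, Matrix.mul_smul, smul_smul, h2, Complex.star_def, hc',
        one_smul]
  · have heq : (fun P => (c • U) * P * star (c • U)) = fun P => U * P * star U := by
      funext P
      rw [star_smul, Matrix.smul_mul, Matrix.mul_smul, Matrix.smul_mul, smul_smul,
        Complex.star_def, hc, one_smul]
    rw [heq]
    exact h.2

lemma pauli_conj_pauli (a b v w : G3 n) :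
    pauliXZ n a b * pauliXZ n v w * star (pauliXZ n a b)
      = om (dotp b v - dotp w a) • pauliXZ n v w := by
  rw [pauli_mul, pauli_star, Matrix.smul_mul, Matrix.mul_smul, smul_smul, pauli_mul,
    smul_smul]
  have hv : a + v + -a = v := by abel
  have hw : b + w + -b = w := by abel
  rw [hv, hw, ← om_add, ← om_add]
  congr 2
  simp only [dotp, dotProduct, Pi.add_apply, Pi.neg_apply, mul_add, add_mul, mul_neg,
    neg_mul, Finset.sum_add_distrib, Finset.sum_neg_distrib]
  ring

lemma clifford_pauli (a b : G3 n) : IsClifford n (pauliXZ n a b) := by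
  apply clifford_of_mapsTo (pauli_unitary a b)
  rintro P ⟨δ, v, w, rfl⟩
  have hδ : (omega3 ^ δ.val : ℂ) = om δ := rfl
  rw [hδ, Matrix.mul_smul, Matrix.smul_mul, pauli_conj_pauli, smul_smul, ← om_add]
  exact ⟨_, v, w, rfl⟩

noncomputable def toUnit {U : Matrix (G3 n) (G3 n) ℂ}
    (hU : U ∈ unitary (Matrix (G3 n) (G3 n) ℂ)) : (Matrix (G3 n) (G3 n) ℂ)ˣ :=
  ⟨U, star U, (Unitary.mem_iff.mp hU).2, (Unitary.mem_iff.mp hU).1⟩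

lemma sum_normSq_mulVec {U : Matrix (G3 n) (G3 n) ℂ}
    (hU : U ∈ unitary (Matrix (G3 n) (G3 n) ℂ)) (f : G3 n → ℂ) :
    ∑ x, Complex.normSq (U.mulVec f x) = ∑ x, Complex.normSq (f x) := by
  have key : ∀ g : G3 n → ℂ,
      ((∑ x, Complex.normSq (g x) : ℝ) : ℂ) = dotProduct (star g) g := by
    intro g
    push_cast
    rw [dotProduct]
    apply Finset.sum_congr rfl
    intro x _
    rw [Pi.star_apply, Complex.star_def, ← Complex.normSq_eq_conj_mul_self]
  have h2 : dotProduct (star (U.mulVec f)) (U.mulVec f)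
      = dotProduct (star f) f := by
    have hstar : U.conjTranspose * U = 1 := by
      rw [← Matrix.star_eq_conjTranspose]; exact (Unitary.mem_iff.mp hU).1
    rw [Matrix.star_mulVec, ← Matrix.dotProduct_mulVec, Matrix.mulVec_mulVec, hstar,
      Matrix.one_mulVec]
  have h3 : ((∑ x, Complex.normSq (U.mulVec f x) : ℝ) : ℂ)
      = ((∑ x, Complex.normSq (f x) : ℝ) : ℂ) := by
    rw [key, key, h2]
  exact Complex.ofReal_injective h3

def StabProps (n : ℕ) (S : Subgroup (Matrix (G3 n) (G3 n) ℂ)ˣ) (ψ : G3 n → ℂ) : Prop :=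
  Nat.card S = 3 ^ n ∧
  (∀ A ∈ S, ∀ B ∈ S, A * B = B * A) ∧
  (∀ A ∈ S, (A : Matrix (G3 n) (G3 n) ℂ) ∈ PauliGroup n) ∧
  (∀ A ∈ S, ∀ c : ℂ,
    (A : Matrix (G3 n) (G3 n) ℂ) = c • 1 → (A : Matrix (G3 n) (G3 n) ℂ) = 1) ∧
  (∀ A ∈ S, (A : Matrix (G3 n) (G3 n) ℂ).mulVec ψ = ψ)

lemma trans_lemma {U : Matrix (G3 n) (G3 n) ℂ} (hU : IsClifford n U)
    {S : Subgroup (Matrix (G3 n) (G3 n) ℂ)ˣ} {ψ : G3 n → ℂ} (h : StabProps n S ψ) :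
    StabProps n (S.map (MulAut.conj (toUnit hU.1)).toMonoidHom) (U.mulVec ψ) := by
  obtain ⟨hcard, hcomm, hpauli, hscal, hstab⟩ := h
  have h1 : star U * U = 1 := (Unitary.mem_iff.mp hU.1).1
  set u := toUnit hU.1 with hu
  have huval : (u : Matrix (G3 n) (G3 n) ℂ) = U := rfl
  have huinv : ((u⁻¹ : (Matrix (G3 n) (G3 n) ℂ)ˣ) : Matrix (G3 n) (G3 n) ℂ) = star U := rfl
  have hinj : Function.Injective (MulAut.conj u).toMonoidHom := (MulAut.conj u).injective
  have hmem : ∀ B, B ∈ S.map (MulAut.conj u).toMonoidHom ↔ ∃ A ∈ S, u * A * u⁻¹ = B := by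
    intro B
    simp [Subgroup.mem_map, MulAut.conj_apply]
  have hval : ∀ A : (Matrix (G3 n) (G3 n) ℂ)ˣ,
      ((u * A * u⁻¹ : (Matrix (G3 n) (G3 n) ℂ)ˣ) : Matrix (G3 n) (G3 n) ℂ)
        = U * (A : Matrix (G3 n) (G3 n) ℂ) * star U := by
    intro A
    rw [Units.val_mul, Units.val_mul, huval, huinv]
  refine ⟨?_, ?_, ?_, ?_, ?_⟩
  · rw [← hcard]
    exact (Nat.card_congr (S.equivMapOfInjective _ hinj).toEquiv).symm
  · rintro B hB B' hB'
    rw [hmem] at hB hB'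
    obtain ⟨A, hA, rfl⟩ := hB
    obtain ⟨A', hA', rfl⟩ := hB'
    have hgr : ∀ X Y : (Matrix (G3 n) (G3 n) ℂ)ˣ,
        (u * X * u⁻¹) * (u * Y * u⁻¹) = u * (X * Y) * u⁻¹ := by
      intro X Y; group
    rw [hgr, hgr, hcomm A hA A' hA']
  · rintro B hB
    rw [hmem] at hB
    obtain ⟨A, hA, rfl⟩ := hB
    rw [hval]
    exact clifford_conj_mem hU (hpauli A hA)
  · rintro B hB c hc
    rw [hmem] at hB
    obtain ⟨A, hA, rfl⟩ := hB
    rw [hval] at hc ⊢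
    have hAval : (A : Matrix (G3 n) (G3 n) ℂ) = c • 1 := by
      have h2 := congrArg (fun X => star U * X * U) hc
      rw [conj_cancel hU.1] at h2
      rw [h2, Matrix.mul_smul, Matrix.smul_mul, mul_one, h1]
    have hA1 : (A : Matrix (G3 n) (G3 n) ℂ) = 1 := hscal A hA c hAval
    rw [hA1, mul_one]
    exact (Unitary.mem_iff.mp hU.1).2
  · rintro B hB
    rw [hmem] at hB
    obtain ⟨A, hA, rfl⟩ := hB
    rw [hval]
    have hassoc : U * (A : Matrix (G3 n) (G3 n) ℂ) * star U * U
        = U * (A : Matrix (G3 n) (G3 n) ℂ) := by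
      rw [Matrix.mul_assoc (U * (A : Matrix (G3 n) (G3 n) ℂ)) (star U) U, h1, mul_one]
    rw [Matrix.mulVec_mulVec, hassoc, ← Matrix.mulVec_mulVec, hstab A hA]

end StabAux
namespace StabAux

variable {n : ℕ}

section PermGate

noncomputable def mulVecEquiv (M N : Matrix (Fin n) (Fin n) (ZMod 3))
    (h1 : M * N = 1) (h2 : N * M = 1) : G3 n ≃ G3 n :=
  ⟨fun x => M.mulVec x, fun x => N.mulVec x,
   fun x => by
     show N.mulVec (M.mulVec x) = x
     rw [Matrix.mulVec_mulVec, h2, Matrix.one_mulVec],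
   fun x => by
     show M.mulVec (N.mulVec x) = x
     rw [Matrix.mulVec_mulVec, h1, Matrix.one_mulVec]⟩

noncomputable def permGate (M N : Matrix (Fin n) (Fin n) (ZMod 3))
    (h1 : M * N = 1) (h2 : N * M = 1) : Matrix (G3 n) (G3 n) ℂ :=
  mono (mulVecEquiv M N h1 h2) fun _ => 1

variable (M N : Matrix (Fin n) (Fin n) (ZMod 3)) (h1 : M * N = 1) (h2 : N * M = 1)

lemma permGate_star :
    star (permGate M N h1 h2) = mono (mulVecEquiv M N h1 h2).symm fun _ => 1 := by
  rw [permGate, mono_star]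
  exact mono_ext (fun _ => rfl) (fun _ => by rw [map_one])

lemma permGate_unitary : permGate M N h1 h2 ∈ unitary (Matrix (G3 n) (G3 n) ℂ) := by
  rw [Unitary.mem_iff]
  constructor
  · rw [permGate_star, permGate, mono_mul]
    rw [show mono ((mulVecEquiv M N h1 h2).trans (mulVecEquiv M N h1 h2).symm)
          (fun x => (1:ℂ) * 1) = mono (Equiv.refl (G3 n)) (fun _ => (1:ℂ)) from
      mono_ext (fun x => Equiv.symm_apply_apply (mulVecEquiv M N h1 h2) x) (fun x => one_mul 1)]
    exact mono_refl_one
  · rw [mul_eq_one_comm, permGate_star, permGate, mono_mul]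
    rw [show mono ((mulVecEquiv M N h1 h2).trans (mulVecEquiv M N h1 h2).symm)
          (fun x => (1:ℂ) * 1) = mono (Equiv.refl (G3 n)) (fun _ => (1:ℂ)) from
      mono_ext (fun x => Equiv.symm_apply_apply (mulVecEquiv M N h1 h2) x) (fun x => one_mul 1)]
    exact mono_refl_one

lemma permGate_conj (v w : G3 n) :
    permGate M N h1 h2 * pauliXZ n v w * star (permGate M N h1 h2)
      = pauliXZ n (M.mulVec v) (N.transpose.mulVec w) := by
  rw [permGate_star, permGate, pauli_eq_mono, mono_mul, mono_mul, pauli_eq_mono]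
  apply mono_ext
  · intro x
    show M.mulVec ((Equiv.addRight v) (N.mulVec x)) = x + M.mulVec v
    show M.mulVec (N.mulVec x + v) = x + M.mulVec v
    rw [Matrix.mulVec_add, Matrix.mulVec_mulVec, h1, Matrix.one_mulVec]
  · intro x
    show (1 : ℂ) * om (dotp w ((mulVecEquiv M N h1 h2).symm x)) * 1 = om (dotp (N.transpose.mulVec w) x)
    rw [one_mul, mul_one]
    congr 1
    show dotp w (N.mulVec x) = dotp (N.transpose.mulVec w) x
    rw [dotp, dotp, Matrix.dotProduct_mulVec, ← Matrix.mulVec_transpose]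

lemma permGate_clifford : IsClifford n (permGate M N h1 h2) := by
  apply clifford_of_mapsTo (permGate_unitary M N h1 h2)
  rintro P ⟨δ, v, w, rfl⟩
  have hδ : (omega3 ^ δ.val : ℂ) = om δ := rfl
  rw [hδ, Matrix.mul_smul, Matrix.smul_mul, permGate_conj]
  exact ⟨δ, _, _, rfl⟩

end PermGate

section DiagGate

variable (A : Matrix (Fin n) (Fin n) (ZMod 3))

noncomputable def diagGate : Matrix (G3 n) (G3 n) ℂ :=
  mono (Equiv.refl (G3 n)) fun x => om (dotp x (A.mulVec x))

lemma diagGate_star :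
    star (diagGate A) = mono (Equiv.refl (G3 n)) fun x => om (-dotp x (A.mulVec x)) := by
  rw [diagGate, mono_star]
  exact mono_ext (fun _ => rfl) (fun x => by rw [conj_om]; rfl)

lemma diagGate_unitary : diagGate A ∈ unitary (Matrix (G3 n) (G3 n) ℂ) := by
  have key : ∀ (c d : G3 n → ℂ), (∀ x, c x * d x = 1) →
      mono (Equiv.refl (G3 n)) c * mono (Equiv.refl (G3 n)) d = 1 := by
    intro c d h
    rw [mono_mul]
    rw [show mono ((Equiv.refl (G3 n)).trans (Equiv.refl (G3 n)))
          (fun x => c ((Equiv.refl (G3 n)) x) * d x)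
        = mono (Equiv.refl (G3 n)) (fun _ => (1:ℂ)) from
      mono_ext (fun x => rfl) (fun x => h x)]
    exact mono_refl_one
  rw [Unitary.mem_iff]
  constructor
  · rw [diagGate_star, diagGate]
    apply key
    intro x
    rw [← om_add, neg_add_cancel, om_zero]
  · rw [diagGate_star, diagGate]
    apply key
    intro x
    rw [← om_add, add_neg_cancel, om_zero]

lemma dotp_mulVec_symm (hA : A.transpose = A) (v x : G3 n) : dotp v (A.mulVec x) = dotp (A.mulVec v) x := by
  rw [dotp, dotp, Matrix.dotProduct_mulVec, ← Matrix.mulVec_transpose, hA]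

lemma diagGate_conj (hA : A.transpose = A) (v w : G3 n) :
    diagGate A * pauliXZ n v w * star (diagGate A)
      = om (dotp v (A.mulVec v)) • pauliXZ n v (w + A.mulVec v + A.mulVec v) := by
  rw [diagGate_star, diagGate, pauli_eq_mono, mono_mul, mono_mul, pauli_eq_mono, smul_mono]
  apply mono_ext
  · intro x
    rfl
  · intro x
    show om (dotp ((Equiv.addRight v) x) (A.mulVec ((Equiv.addRight v) x))) * om (dotp w x)
        * om (-dotp x (A.mulVec x))
      = om (dotp v (A.mulVec v)) * om (dotp (w + A.mulVec v + A.mulVec v) x)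
    rw [← om_add, ← om_add, ← om_add]
    congr 1
    show dotp (x + v) (A.mulVec (x + v)) + dotp w x + -dotp x (A.mulVec x)
      = dotp v (A.mulVec v) + dotp (w + A.mulVec v + A.mulVec v) x
    have hs : dotp v (A.mulVec x) = dotp (A.mulVec v) x := dotp_mulVec_symm A hA v x
    have hc : dotp x (A.mulVec v) = dotp (A.mulVec v) x := dotProduct_comm _ _
    rw [Matrix.mulVec_add]
    simp only [dotp, add_dotProduct, dotProduct_add] at *
    rw [hs, hc]
    ring

lemma diagGate_clifford (hA : A.transpose = A) : IsClifford n (diagGate A) := by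
  apply clifford_of_mapsTo (diagGate_unitary A)
  rintro P ⟨δ, v, w, rfl⟩
  have hδ : (omega3 ^ δ.val : ℂ) = om δ := rfl
  rw [hδ, Matrix.mul_smul, Matrix.smul_mul, diagGate_conj A hA, smul_smul, ← om_add]
  exact ⟨_, _, _, rfl⟩

end DiagGate

end StabAux
namespace StabAux

variable {n : ℕ}

noncomputable def s3 : ℂ := ((Real.sqrt 3 : ℝ) : ℂ)

lemma s3_mul_self : s3 * s3 = 3 := by
  rw [s3, ← Complex.ofReal_mul, Real.mul_self_sqrt (by norm_num : (0:ℝ) ≤ 3)]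
  norm_num

lemma conj_s3_inv_pow (c : ℕ) : (starRingEnd ℂ) (s3⁻¹ ^ c) = s3⁻¹ ^ c := by
  rw [map_pow, map_inv₀, s3, Complex.conj_ofReal]

lemma s3_norm_const (c : ℕ) : s3⁻¹ ^ c * s3⁻¹ ^ c * 3 ^ c = 1 := by
  rw [← mul_pow, ← mul_pow]
  have h : s3⁻¹ * s3⁻¹ * 3 = 1 := by
    rw [← s3_mul_self]
    have h0 : s3 ≠ 0 := by
      intro h
      have := s3_mul_self
      rw [h, mul_zero] at this
      norm_num at this
    field_simp
  rw [h, one_pow]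

/-- the partial Fourier transform on the coordinates in `T`. -/
noncomputable def Fgate (T : Finset (Fin n)) : Matrix (G3 n) (G3 n) ℂ :=
  Matrix.of fun y x =>
    if ∀ j ∉ T, y j = x j then s3⁻¹ ^ T.card * om (∑ j ∈ T, y j * x j) else 0

/-- The key character sum computation. -/
lemma char_sum (T : Finset (Fin n)) (u z : G3 n) :
    (∑ t : G3 n, if ∀ j ∉ T, t j = z j then om (∑ j ∈ T, u j * t j) else 0)
      = if ∀ j ∈ T, u j = 0 then (3:ℂ) ^ T.card else 0 := by
  classical
  have hsummand : ∀ t : G3 n,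
      (if ∀ j ∉ T, t j = z j then om (∑ j ∈ T, u j * t j) else 0)
        = ∏ j, (if j ∈ T then om (u j * t j) else if t j = z j then 1 else 0) := by
    intro t
    by_cases h : ∀ j ∉ T, t j = z j
    · rw [if_pos h, ← Finset.prod_mul_prod_compl T]
      have h1 : ∀ j ∈ T, (if j ∈ T then om (u j * t j) else if t j = z j then 1 else 0)
          = om (u j * t j) := fun j hj => if_pos hj
      have h2 : ∀ j ∈ Tᶜ, (if j ∈ T then om (u j * t j) else if t j = z j then 1 else 0)
          = 1 := by
        intro j hj
        have hj' := Finset.mem_compl.mp hj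
        rw [if_neg hj', if_pos (h j hj')]
      rw [Finset.prod_congr rfl h1, Finset.prod_congr rfl h2, Finset.prod_const_one, mul_one,
        e_sum_eq_prod]
    · rw [if_neg h]
      push_neg at h
      obtain ⟨j0, hj0, hne⟩ := h
      symm
      apply Finset.prod_eq_zero (Finset.mem_univ j0)
      rw [if_neg hj0, if_neg hne]
  rw [Finset.sum_congr rfl (fun t _ => hsummand t),
    show (∑ t : G3 n, ∏ j, if j ∈ T then om (u j * t j) else if t j = z j then 1 else 0)
      = ∏ j, ∑ c : ZMod 3, (if j ∈ T then om (u j * c) else if c = z j then 1 else 0) from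
    (Fintype.prod_sum fun j c => if j ∈ T then om (u j * c) else if c = z j then 1 else 0).symm]
  have hfac : ∀ j, (∑ c : ZMod 3, if j ∈ T then om (u j * c) else if c = z j then 1 else 0)
      = if j ∈ T then (if u j = 0 then (3:ℂ) else 0) else 1 := by
    intro j
    by_cases hj : j ∈ T
    · simp only [if_pos hj]
      exact om_sum (u j)
    · simp only [if_neg hj]
      simp
  rw [Finset.prod_congr rfl (fun j _ => hfac j)]
  by_cases hall : ∀ j ∈ T, u j = 0
  · rw [if_pos hall, ← Finset.prod_mul_prod_compl T]
    have h1 : ∀ j ∈ T, (if j ∈ T then (if u j = 0 then (3:ℂ) else 0) else 1) = 3 := by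
      intro j hj
      rw [if_pos hj, if_pos (hall j hj)]
    have h2 : ∀ j ∈ Tᶜ, (if j ∈ T then (if u j = 0 then (3:ℂ) else 0) else 1) = 1 := by
      intro j hj
      rw [if_neg (Finset.mem_compl.mp hj)]
    rw [Finset.prod_congr rfl h1, Finset.prod_congr rfl h2, Finset.prod_const_one, mul_one,
      Finset.prod_const]
  · rw [if_neg hall]
    push_neg at hall
    obtain ⟨j0, hj0, hne⟩ := hall
    apply Finset.prod_eq_zero (Finset.mem_univ j0)
    rw [if_pos hj0, if_neg hne]

lemma Fgate_apply (T : Finset (Fin n)) (y x : G3 n) :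
    Fgate T y x
      = if ∀ j ∉ T, y j = x j then s3⁻¹ ^ T.card * om (∑ j ∈ T, y j * x j) else 0 := rfl

lemma Fgate_star_apply (T : Finset (Fin n)) (y x : G3 n) :
    star (Fgate T) y x
      = if ∀ j ∉ T, y j = x j then s3⁻¹ ^ T.card * om (-∑ j ∈ T, y j * x j) else 0 := by
  rw [Matrix.star_apply, Fgate_apply]
  by_cases h : ∀ j ∉ T, y j = x j
  · rw [if_pos (show ∀ j ∉ T, x j = y j from fun j hj => (h j hj).symm), if_pos h]
    have hsum : (∑ j ∈ T, x j * y j) = ∑ j ∈ T, y j * x j :=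
      Finset.sum_congr rfl fun j _ => mul_comm _ _
    rw [hsum, star_mul', Complex.star_def, conj_s3_inv_pow, conj_om]
  · rw [if_neg (fun hc => h (fun j hj => ((hc j hj).symm : y j = x j))), if_neg h, star_zero]

lemma Fgate_unitary (T : Finset (Fin n)) : Fgate T ∈ unitary (Matrix (G3 n) (G3 n) ℂ) := by
  classical
  rw [Unitary.mem_iff]
  suffices hms : Fgate T * star (Fgate T) = 1 by
    exact ⟨by rw [mul_eq_one_comm]; exact hms, hms⟩
  ext y x
  rw [Matrix.mul_apply]
  by_cases hoff : ∀ j ∉ T, y j = x j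
  · have hsummand : ∀ t : G3 n, Fgate T y t * star (Fgate T) t x
        = s3⁻¹ ^ T.card * s3⁻¹ ^ T.card *
          (if ∀ j ∉ T, t j = x j then om (∑ j ∈ T, (y j - x j) * t j) else 0) := by
      intro t
      rw [Fgate_apply, Fgate_star_apply]
      by_cases h1 : ∀ j ∉ T, t j = x j
      · rw [if_pos h1, if_pos (fun j hj => (hoff j hj).trans (h1 j hj).symm), if_pos h1]
        have hexp : om (∑ j ∈ T, y j * t j) * om (-∑ j ∈ T, t j * x j)
            = om (∑ j ∈ T, (y j - x j) * t j) := by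
          rw [← om_add]
          congr 1
          rw [← Finset.sum_neg_distrib, ← Finset.sum_add_distrib]
          exact Finset.sum_congr rfl fun j _ => by ring
        rw [mul_mul_mul_comm, hexp]
      · rw [if_neg h1, mul_zero, if_neg h1, mul_zero]
    rw [Finset.sum_congr rfl (fun t _ => hsummand t), ← Finset.mul_sum, char_sum]
    by_cases hT : ∀ j ∈ T, y j - x j = 0
    · rw [if_pos hT]
      have hyx : y = x := funext fun j => by
        by_cases hj : j ∈ T
        · have := hT j hj
          rwa [sub_eq_zero] at this
        · exact hoff j hj
      rw [hyx, Matrix.one_apply_eq, s3_norm_const]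
    · rw [if_neg hT, mul_zero]
      push_neg at hT
      obtain ⟨j0, hj0, hne⟩ := hT
      rw [Matrix.one_apply_ne (fun h => hne (by rw [h, sub_self]))]
  · have hyx : y ≠ x := fun h => hoff (fun j _ => by rw [h])
    rw [Matrix.one_apply_ne hyx]
    apply Finset.sum_eq_zero
    intro t _
    rw [Fgate_apply, Fgate_star_apply]
    by_cases h1 : ∀ j ∉ T, y j = t j
    · rw [if_neg (show ¬(∀ j ∉ T, t j = x j) from
        fun h2 => hoff fun j hj => (h1 j hj).trans (h2 j hj)), mul_zero]
    · rw [if_neg h1, zero_mul]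

lemma Fgate_conj (T : Finset (Fin n)) (v w : G3 n) :
    Fgate T * pauliXZ n v w * star (Fgate T)
      = om (-∑ j ∈ T, w j * v j) •
          pauliXZ n (fun j => if j ∈ T then -w j else v j)
            (fun j => if j ∈ T then v j else w j) := by
  classical
  have hps : ∀ z x : G3 n, (pauliXZ n v w * star (Fgate T)) z x
      = (if ∀ j ∉ T, (z - v) j = x j then
          om (dotp w (z - v)) * (s3⁻¹ ^ T.card * om (-∑ j ∈ T, (z - v) j * x j)) else 0) := by
    intro z x
    rw [Matrix.mul_apply]
    rw [Finset.sum_eq_single (z - v)]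
    · have hpe : pauliXZ n v w z (z - v) = om (dotp w (z - v)) := by
        show (if z = z - v + v then om (dotp w (z - v)) else 0) = _
        rw [if_pos (sub_add_cancel z v).symm]
      rw [hpe, Fgate_star_apply, mul_ite, mul_zero]
    · intro t _ ht
      have hz : pauliXZ n v w z t = 0 := by
        show (if z = t + v then om (dotp w t) else 0) = 0
        rw [if_neg (fun h => ht (by rw [h, add_sub_cancel_right]))]
      rw [hz, zero_mul]
    · intro h
      exact absurd (Finset.mem_univ _) h
  rw [Matrix.mul_assoc]
  ext y x
  rw [Matrix.mul_apply, Finset.sum_congr rfl (fun z _ => by rw [hps z x]), smul_pauli_apply]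
  by_cases hoff : ∀ j ∉ T, y j = x j + v j
  · set u : G3 n := fun j => y j + w j - x j with hu
    set C : ZMod 3 := (∑ j ∈ T, (v j * x j - w j * v j)) + ∑ j ∈ Tᶜ, w j * x j with hC
    have hsummand : ∀ z : G3 n,
        Fgate T y z * (if ∀ j ∉ T, (z - v) j = x j then
          om (dotp w (z - v)) * (s3⁻¹ ^ T.card * om (-∑ j ∈ T, (z - v) j * x j)) else 0)
        = (s3⁻¹ ^ T.card * s3⁻¹ ^ T.card * om C) *
          (if ∀ j ∉ T, z j = x j + v j then om (∑ j ∈ T, u j * z j) else 0) := by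
      intro z
      rw [Fgate_apply]
      by_cases hc2 : ∀ j ∉ T, z j = x j + v j
      · have hc2' : ∀ j ∉ T, (z - v) j = x j := fun j hj => by
          rw [Pi.sub_apply, hc2 j hj, add_sub_cancel_right]
        have hc1 : ∀ j ∉ T, y j = z j := fun j hj => by
          rw [hc2 j hj, ← hoff j hj]
        rw [if_pos hc1, if_pos hc2', if_pos hc2]
        have hD : dotp w (z - v)
            = (∑ j ∈ T, w j * (z j - v j)) + ∑ j ∈ Tᶜ, w j * x j := by
          rw [dotp, dotProduct, ← Finset.sum_add_sum_compl T]
          congr 1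
          exact Finset.sum_congr rfl fun j hj => by
            rw [Pi.sub_apply, hc2 j (Finset.mem_compl.mp hj), add_sub_cancel_right]
        have hS2 : (∑ j ∈ T, (z - v) j * x j) = ∑ j ∈ T, (z j - v j) * x j :=
          Finset.sum_congr rfl fun j _ => by rw [Pi.sub_apply]
        have hexp : (∑ j ∈ T, y j * z j) + ((∑ j ∈ T, w j * (z j - v j))
              + ∑ j ∈ Tᶜ, w j * x j + -∑ j ∈ T, (z j - v j) * x j)
            = C + ∑ j ∈ T, u j * z j := by
          have hmerge : (∑ j ∈ T, y j * z j) + (∑ j ∈ T, w j * (z j - v j))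
                + -(∑ j ∈ T, (z j - v j) * x j)
              = ∑ j ∈ T, ((v j * x j - w j * v j) + u j * z j) := by
            rw [← Finset.sum_neg_distrib, ← Finset.sum_add_distrib, ← Finset.sum_add_distrib]
            exact Finset.sum_congr rfl fun j _ => by rw [hu]; ring
          rw [hC, Finset.sum_add_distrib] at *
          linear_combination hmerge
        calc (s3⁻¹ ^ T.card * om (∑ j ∈ T, y j * z j)) *
              (om (dotp w (z - v)) * (s3⁻¹ ^ T.card * om (-∑ j ∈ T, (z - v) j * x j)))
            = s3⁻¹ ^ T.card * s3⁻¹ ^ T.card *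
              (om (∑ j ∈ T, y j * z j) * om (dotp w (z - v))
                * om (-∑ j ∈ T, (z - v) j * x j)) := by ring
          _ = s3⁻¹ ^ T.card * s3⁻¹ ^ T.card * om C * om (∑ j ∈ T, u j * z j) := by
              rw [← om_add, ← om_add, hD, hS2]
              rw [show (∑ j ∈ T, y j * z j) + ((∑ j ∈ T, w j * (z j - v j))
                    + ∑ j ∈ Tᶜ, w j * x j) + -∑ j ∈ T, (z j - v j) * x j
                  = (∑ j ∈ T, y j * z j) + ((∑ j ∈ T, w j * (z j - v j))
                    + ∑ j ∈ Tᶜ, w j * x j + -∑ j ∈ T, (z j - v j) * x j) from by ring]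
              rw [hexp, om_add]
              ring
          _ = _ := by ring
      · have hc2' : ¬ ∀ j ∉ T, (z - v) j = x j := fun h => hc2 (fun j hj => by
          have := h j hj
          rw [Pi.sub_apply, sub_eq_iff_eq_add] at this
          exact this)
        rw [if_neg hc2', mul_zero, if_neg hc2, mul_zero]
    rw [Finset.sum_congr rfl (fun z _ => hsummand z), ← Finset.mul_sum, char_sum]
    by_cases hT : ∀ j ∈ T, u j = 0
    · rw [if_pos hT]
      have hyx : y = x + (fun j => if j ∈ T then -w j else v j) := funext fun j => by
        by_cases hj : j ∈ T
        · have h0 := hT j hj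
          rw [hu] at h0
          have : y j = x j + -w j := by linear_combination h0
          rw [Pi.add_apply, if_pos hj]
          exact this
        · rw [Pi.add_apply, if_neg hj]
          exact hoff j hj
      rw [if_pos hyx]
      have hphase : C = (-∑ j ∈ T, w j * v j)
          + dotp (fun j => if j ∈ T then v j else w j) x := by
        have hd : dotp (fun j => if j ∈ T then v j else w j) x
            = (∑ j ∈ T, v j * x j) + ∑ j ∈ Tᶜ, w j * x j := by
          rw [dotp, dotProduct, ← Finset.sum_add_sum_compl T]
          congr 1
          · exact Finset.sum_congr rfl fun j hj => by rw [if_pos hj]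
          · exact Finset.sum_congr rfl fun j hj => by
              rw [if_neg (Finset.mem_compl.mp hj)]
        rw [hC, hd, Finset.sum_sub_distrib]
        ring
      rw [hphase, om_add]
      calc s3⁻¹ ^ T.card * s3⁻¹ ^ T.card
            * (om (-∑ j ∈ T, w j * v j) * om (dotp (fun j => if j ∈ T then v j else w j) x))
            * 3 ^ T.card
          = (s3⁻¹ ^ T.card * s3⁻¹ ^ T.card * 3 ^ T.card)
            * (om (-∑ j ∈ T, w j * v j) * om (dotp (fun j => if j ∈ T then v j else w j) x))
            := by ring
        _ = _ := by rw [s3_norm_const, one_mul]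
    · rw [if_neg hT, mul_zero]
      push_neg at hT
      obtain ⟨j0, hj0, hne⟩ := hT
      rw [if_neg (fun h : y = x + _ => hne (by
        have := congrFun h j0
        rw [Pi.add_apply, if_pos hj0] at this
        rw [hu]
        simp only []
        rw [this]
        ring))]
  · push_neg at hoff
    obtain ⟨j0, hj0, hne⟩ := hoff
    have hrhs : ¬ (y = x + fun j => if j ∈ T then -w j else v j) := fun h => hne (by
      have := congrFun h j0
      rwa [Pi.add_apply, if_neg hj0] at this)
    rw [if_neg hrhs]
    apply Finset.sum_eq_zero
    intro z _
    rw [Fgate_apply]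
    by_cases h1 : ∀ j ∉ T, y j = z j
    · by_cases h2 : ∀ j ∉ T, (z - v) j = x j
      · exfalso
        apply hne
        rw [h1 j0 hj0]
        have := h2 j0 hj0
        rw [Pi.sub_apply, sub_eq_iff_eq_add] at this
        exact this
      · rw [if_neg h2, mul_zero]
    · rw [if_neg h1, zero_mul]

lemma Fgate_clifford (T : Finset (Fin n)) : IsClifford n (Fgate T) := by
  apply clifford_of_mapsTo (Fgate_unitary T)
  rintro P ⟨δ, v, w, rfl⟩
  have hδ : (omega3 ^ δ.val : ℂ) = om δ := rfl
  rw [hδ, Matrix.mul_smul, Matrix.smul_mul, Fgate_conj, smul_smul, ← om_add]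
  exact ⟨_, _, _, rfl⟩

end StabAux
namespace StabAux

variable {n : ℕ}

noncomputable def e0 (n : ℕ) : G3 n → ℂ := fun x => if x = 0 then 1 else 0

lemma smul_pauli_mul (δ δ' : ZMod 3) (v w v' w' : G3 n) :
    (om δ • pauliXZ n v w) * (om δ' • pauliXZ n v' w')
      = om (δ + δ' + dotp w v') • pauliXZ n (v + v') (w + w') := by
  rw [Matrix.smul_mul, Matrix.mul_smul, smul_smul, pauli_mul, smul_smul, ← om_add, ← om_add,
    add_assoc]

lemma pauli_z_mul (w w' : G3 n) :
    pauliXZ n 0 w * pauliXZ n 0 w' = pauliXZ n 0 (w + w') := by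
  have h := pauli_mul (0 : G3 n) w 0 w'
  rwa [dotp_zero_right, om_zero, one_smul, zero_add] at h

noncomputable def zUnit (w : G3 n) : (Matrix (G3 n) (G3 n) ℂ)ˣ :=
  ⟨pauliXZ n 0 w, pauliXZ n 0 (-w),
   by rw [pauli_z_mul, add_neg_cancel, pauli_zero_zero],
   by rw [pauli_z_mul, neg_add_cancel, pauli_zero_zero]⟩

lemma zUnit_val (w : G3 n) : (zUnit w : Matrix (G3 n) (G3 n) ℂ) = pauliXZ n 0 w := rfl

lemma zUnit_mul (w w' : G3 n) : zUnit w * zUnit w' = zUnit (w + w') :=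
  Units.ext (pauli_z_mul w w')

lemma zUnit_one : zUnit (0 : G3 n) = 1 := Units.ext pauli_zero_zero

noncomputable def zSubgroup (n : ℕ) : Subgroup (Matrix (G3 n) (G3 n) ℂ)ˣ where
  carrier := Set.range (zUnit (n := n))
  mul_mem' := by rintro _ _ ⟨w, rfl⟩ ⟨w', rfl⟩; exact ⟨w + w', (zUnit_mul w w').symm⟩
  one_mem' := ⟨0, zUnit_one⟩
  inv_mem' := by
    rintro _ ⟨w, rfl⟩
    refine ⟨-w, ?_⟩
    have h : zUnit (-w) * zUnit w = 1 := by rw [zUnit_mul, neg_add_cancel, zUnit_one]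
    exact eq_inv_of_mul_eq_one_left h

lemma zUnit_injective : Function.Injective (zUnit (n := n)) := by
  intro w w' h
  have h2 : pauliXZ n 0 w = pauliXZ n 0 w' := congrArg Units.val h
  exact (pauli_inj h2).2

lemma card_G3 : Nat.card (G3 n) = 3 ^ n := by
  rw [Nat.card_eq_fintype_card, Fintype.card_fun, ZMod.card, Fintype.card_fin]

lemma card_zSubgroup : Nat.card (zSubgroup n) = 3 ^ n := by
  have e : G3 n ≃ zSubgroup n := by
    apply Equiv.ofBijective (fun w => (⟨zUnit w, ⟨w, rfl⟩⟩ : zSubgroup n))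
    constructor
    · intro w w' h
      exact zUnit_injective (congrArg Subtype.val h)
    · rintro ⟨A, w, rfl⟩
      exact ⟨w, rfl⟩
  rw [← Nat.card_congr e, card_G3]

lemma pauli_z_scalar {w : G3 n} {c : ℂ} (hc : pauliXZ n 0 w = c • 1) :
    w = 0 ∧ c = 1 := by
  have hentry : ∀ x : G3 n, om (dotp w x) = c := by
    intro x
    have h := congrFun (congrFun hc x) x
    have hl : pauliXZ n 0 w x x = om (dotp w x) := by
      show (if x = x + 0 then om (dotp w x) else 0) = om (dotp w x)
      rw [if_pos (by rw [add_zero])]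
    rw [hl] at h
    rw [h, Matrix.smul_apply, Matrix.one_apply_eq, smul_eq_mul, mul_one]
  have hc1 : c = 1 := by
    have := hentry 0
    rw [dotp_zero_right, om_zero] at this
    exact this.symm
  refine ⟨funext fun j => ?_, hc1⟩
  have := hentry (Pi.single j 1)
  rw [dotp_single, hc1] at this
  exact (om_eq_one_iff _).mp this

lemma pauli_z_mulVec_e0 (w : G3 n) : (pauliXZ n 0 w).mulVec (e0 n) = e0 n := by
  funext y
  rw [Matrix.mulVec]
  show (∑ x, pauliXZ n 0 w y x * e0 n x) = e0 n y
  rw [Finset.sum_eq_single 0]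
  · have h0 : e0 n (0 : G3 n) = 1 := if_pos rfl
    rw [h0, mul_one]
    show (if y = 0 + 0 then om (dotp w 0) else 0) = e0 n y
    rw [dotp_zero_right, om_zero, add_zero]
    rfl
  · intro x _ hx
    have hx0 : e0 n x = 0 := if_neg hx
    rw [hx0, mul_zero]
  · intro h; exact absurd (Finset.mem_univ _) h

lemma zgroup_props : StabProps n (zSubgroup n) (e0 n) := by
  refine ⟨card_zSubgroup, ?_, ?_, ?_, ?_⟩
  · rintro _ ⟨w, rfl⟩ _ ⟨w', rfl⟩
    rw [zUnit_mul, zUnit_mul, add_comm]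
  · rintro _ ⟨w, rfl⟩
    refine ⟨0, 0, w, ?_⟩
    rw [zUnit_val]
    show pauliXZ n 0 w = omega3 ^ (0 : ZMod 3).val • pauliXZ n 0 w
    rw [show ((0 : ZMod 3)).val = 0 from rfl, pow_zero, one_smul]
  · rintro _ ⟨w, rfl⟩ c hc
    rw [zUnit_val] at hc ⊢
    obtain ⟨hw, -⟩ := pauli_z_scalar hc
    rw [hw, pauli_zero_zero]
  · rintro _ ⟨w, rfl⟩
    rw [zUnit_val]
    exact pauli_z_mulVec_e0 w

/-! ### The Lagrangian data of a stabilizer group -/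

def LSet (S : Subgroup (Matrix (G3 n) (G3 n) ℂ)ˣ) : Set (G3 n × G3 n) :=
  {p | ∃ (δ : ZMod 3) (A : (Matrix (G3 n) (G3 n) ℂ)ˣ), A ∈ S ∧
    (A : Matrix (G3 n) (G3 n) ℂ) = om δ • pauliXZ n p.1 p.2}

variable {S : Subgroup (Matrix (G3 n) (G3 n) ℂ)ˣ} {ψ : G3 n → ℂ}

lemma LSet_zero : (0 : G3 n × G3 n) ∈ LSet S := by
  refine ⟨0, 1, one_mem S, ?_⟩
  rw [Units.val_one, om_zero, one_smul]
  exact pauli_zero_zero.symm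

lemma LSet_add {p q : G3 n × G3 n} (hp : p ∈ LSet S) (hq : q ∈ LSet S) :
    p + q ∈ LSet S := by
  obtain ⟨δ, A, hA, hAv⟩ := hp
  obtain ⟨δ', B, hB, hBv⟩ := hq
  refine ⟨δ + δ' + dotp p.2 q.1, A * B, mul_mem hA hB, ?_⟩
  rw [Units.val_mul, hAv, hBv, smul_pauli_mul]
  rfl

lemma smul_pauli_inv_val {A : (Matrix (G3 n) (G3 n) ℂ)ˣ} {δ : ZMod 3} {v w : G3 n}
    (hAv : (A : Matrix (G3 n) (G3 n) ℂ) = om δ • pauliXZ n v w) :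
    ((A⁻¹ : (Matrix (G3 n) (G3 n) ℂ)ˣ) : Matrix (G3 n) (G3 n) ℂ)
      = om (dotp w v - δ) • pauliXZ n (-v) (-w) := by
  apply Units.inv_eq_of_mul_eq_one_right
  rw [hAv, smul_pauli_mul, add_neg_cancel, add_neg_cancel, pauli_zero_zero]
  have harg : δ + (dotp w v - δ) + dotp w (-v) = 0 := by
    simp only [dotp, dotProduct_neg]
    ring
  rw [harg, om_zero, one_smul]

lemma LSet_neg {p : G3 n × G3 n} (hp : p ∈ LSet S) : -p ∈ LSet S := by
  obtain ⟨δ, A, hA, hAv⟩ := hp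
  exact ⟨dotp p.2 p.1 - δ, A⁻¹, inv_mem hA, smul_pauli_inv_val hAv⟩

lemma LSet_smul (c : ZMod 3) {p : G3 n × G3 n} (hp : p ∈ LSet S) : c • p ∈ LSet S := by
  have h3 : c = 0 ∨ c = 1 ∨ c = 2 := (by decide : ∀ c : ZMod 3, c = 0 ∨ c = 1 ∨ c = 2) c
  rcases h3 with rfl | rfl | rfl
  · rw [zero_smul]; exact LSet_zero
  · rw [one_smul]; exact hp
  · rw [show (2 : ZMod 3) = 1 + 1 from by decide, add_smul, one_smul]
    exact LSet_add hp hp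

lemma LSet_isotropic (h : StabProps n S ψ) {p q : G3 n × G3 n}
    (hp : p ∈ LSet S) (hq : q ∈ LSet S) : dotp p.2 q.1 = dotp q.2 p.1 := by
  obtain ⟨δ, A, hA, hAv⟩ := hp
  obtain ⟨δ', B, hB, hBv⟩ := hq
  have hcomm := congrArg Units.val (h.2.1 A hA B hB)
  rw [Units.val_mul, Units.val_mul, hAv, hBv, smul_pauli_mul, smul_pauli_mul] at hcomm
  have h2 := (pauli_param_eq hcomm).1
  linear_combination h2

lemma mem_LSet_of_mem (h : StabProps n S ψ) {A : (Matrix (G3 n) (G3 n) ℂ)ˣ} (hA : A ∈ S) :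
    ∃ (δ : ZMod 3) (p : G3 n × G3 n),
      (A : Matrix (G3 n) (G3 n) ℂ) = om δ • pauliXZ n p.1 p.2 ∧ p ∈ LSet S := by
  obtain ⟨δ, v, w, hval⟩ := h.2.2.1 A hA
  exact ⟨δ, (v, w), hval, ⟨δ, A, hA, hval⟩⟩

lemma same_vw_eq (h : StabProps n S ψ) {A B : (Matrix (G3 n) (G3 n) ℂ)ˣ}
    (hA : A ∈ S) (hB : B ∈ S) {δ δ' : ZMod 3} {p : G3 n × G3 n}
    (hAv : (A : Matrix (G3 n) (G3 n) ℂ) = om δ • pauliXZ n p.1 p.2)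
    (hBv : (B : Matrix (G3 n) (G3 n) ℂ) = om δ' • pauliXZ n p.1 p.2) :
    A = B ∧ δ = δ' := by
  have hBinv := smul_pauli_inv_val hBv
  have hprod : ((A * B⁻¹ : (Matrix (G3 n) (G3 n) ℂ)ˣ) : Matrix (G3 n) (G3 n) ℂ)
      = om (δ - δ') • 1 := by
    rw [Units.val_mul, hAv, hBinv, smul_pauli_mul, add_neg_cancel, add_neg_cancel,
      pauli_zero_zero]
    have harg : δ + (dotp p.2 p.1 - δ') + dotp p.2 (-p.1) = δ - δ' := by
      simp only [dotp, dotProduct_neg]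
      ring
    rw [harg]
  have hsc := h.2.2.2.1 (A * B⁻¹) (mul_mem hA (inv_mem hB)) (om (δ - δ')) hprod
  have hone : A * B⁻¹ = 1 := Units.ext (by rw [hsc, Units.val_one])
  have hAB : A = B := by rwa [mul_inv_eq_one] at hone
  subst hAB
  exact ⟨rfl, (pauli_param_eq (hAv.symm.trans hBv)).1⟩

end StabAux
namespace StabAux

variable {n : ℕ}

lemma exists_coord_frame (V : Submodule (ZMod 3) (G3 n)) :
    ∃ (T : Finset (Fin n)) (M N : Matrix (Fin n) (Fin n) (ZMod 3)),
      M * N = 1 ∧ N * M = 1 ∧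
      (∀ j ∈ T, M.mulVec (Pi.single j 1) ∈ V) ∧
      (∀ v ∈ V, ∀ j ∉ T, N.mulVec v j = 0) := by
  classical
  haveI : Fact (Nat.Prime 3) := ⟨by norm_num⟩
  obtain ⟨C, hC⟩ := Submodule.exists_isCompl V
  set k := Module.finrank (ZMod 3) V with hk
  set m := Module.finrank (ZMod 3) C with hm
  have hkm : k + m = n := by
    have h1 := Submodule.finrank_add_eq_of_isCompl hC
    rwa [show Module.finrank (ZMod 3) (G3 n) = n from by
      rw [Module.finrank_pi, Fintype.card_fin]] at h1
  let bV : Module.Basis (Fin k) (ZMod 3) V := Module.finBasis (ZMod 3) V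
  let bC : Module.Basis (Fin m) (ZMod 3) C := Module.finBasis (ZMod 3) C
  let E : Fin k ⊕ Fin m ≃ Fin n := finSumFinEquiv.trans (finCongr hkm)
  let B : Module.Basis (Fin n) (ZMod 3) (G3 n) :=
    ((bV.prod bC).map (Submodule.prodEquivOfIsCompl V C hC)).reindex E
  let φ : G3 n ≃ₗ[ZMod 3] G3 n := (Pi.basisFun (ZMod 3) (Fin n)).equiv B (Equiv.refl _)
  let M := LinearMap.toMatrix' (φ : G3 n →ₗ[ZMod 3] G3 n)
  let N := LinearMap.toMatrix' (φ.symm : G3 n →ₗ[ZMod 3] G3 n)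
  have hMv : ∀ x, M.mulVec x = φ x := by
    intro x
    calc M.mulVec x = Matrix.toLin' M x := (Matrix.toLin'_apply _ _).symm
      _ = φ x := by rw [Matrix.toLin'_toMatrix']; rfl
  have hNv : ∀ x, N.mulVec x = φ.symm x := by
    intro x
    calc N.mulVec x = Matrix.toLin' N x := (Matrix.toLin'_apply _ _).symm
      _ = φ.symm x := by rw [Matrix.toLin'_toMatrix']; rfl
  have hMN : M * N = 1 := by
    rw [show M * N
        = LinearMap.toMatrix' ((φ : G3 n →ₗ[ZMod 3] G3 n).comp
            (φ.symm : G3 n →ₗ[ZMod 3] G3 n)) from (LinearMap.toMatrix'_comp _ _).symm]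
    rw [show (φ : G3 n →ₗ[ZMod 3] G3 n).comp (φ.symm : G3 n →ₗ[ZMod 3] G3 n)
        = LinearMap.id from by ext x; simp]
    exact LinearMap.toMatrix'_id
  have hNM : N * M = 1 := by
    rw [show N * M
        = LinearMap.toMatrix' ((φ.symm : G3 n →ₗ[ZMod 3] G3 n).comp
            (φ : G3 n →ₗ[ZMod 3] G3 n)) from (LinearMap.toMatrix'_comp _ _).symm]
    rw [show (φ.symm : G3 n →ₗ[ZMod 3] G3 n).comp (φ : G3 n →ₗ[ZMod 3] G3 n)
        = LinearMap.id from by ext x; simp]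
    exact LinearMap.toMatrix'_id
  let ι : Fin k → Fin n := fun i => E (Sum.inl i)
  let T : Finset (Fin n) := Finset.image ι Finset.univ
  have hBι : ∀ i : Fin k, B (ι i) = (bV i : G3 n) := by
    intro i
    show (((bV.prod bC).map (Submodule.prodEquivOfIsCompl V C hC)).reindex E) (E (Sum.inl i))
      = (bV i : G3 n)
    rw [Module.Basis.reindex_apply, Equiv.symm_apply_apply, Module.Basis.map_apply, Module.Basis.prod_apply]
    simp
  have hφB : ∀ j, φ (Pi.single j 1) = B j := by
    intro j
    have h1 : (Pi.basisFun (ZMod 3) (Fin n)) j = Pi.single j 1 := by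
      rw [Pi.basisFun_apply]
    rw [← h1]
    show ((Pi.basisFun (ZMod 3) (Fin n)).equiv B (Equiv.refl _))
      ((Pi.basisFun (ZMod 3) (Fin n)) j) = B j
    rw [Module.Basis.equiv_apply, Equiv.refl_apply]
  have hφsymmB : ∀ i : Fin k, φ.symm ((bV i : G3 n)) = Pi.single (ι i) 1 := by
    intro i
    rw [← hBι i, ← hφB (ι i), LinearEquiv.symm_apply_apply]
  refine ⟨T, M, N, hMN, hNM, ?_, ?_⟩
  · intro j hj
    obtain ⟨i, -, rfl⟩ := Finset.mem_image.mp hj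
    rw [hMv, hφB, hBι]
    exact (bV i).2
  · intro v hv j hj
    rw [hNv]
    have h2 := congrArg (Subtype.val) (bV.sum_repr ⟨v, hv⟩)
    rw [AddSubmonoidClass.coe_finset_sum] at h2
    simp only [SetLike.val_smul] at h2
    rw [← h2, map_sum, Finset.sum_apply]
    apply Finset.sum_eq_zero
    intro i _
    rw [map_smul, hφsymmB i, Pi.smul_apply, Pi.single_apply, if_neg, smul_zero]
    intro hji
    exact hj (by rw [hji]; exact Finset.mem_image_of_mem ι (Finset.mem_univ i))

end StabAux
namespace StabAux

variable {n : ℕ}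

lemma conj_unit_val {U : Matrix (G3 n) (G3 n) ℂ} (hU : IsClifford n U)
    (A : (Matrix (G3 n) (G3 n) ℂ)ˣ) :
    (((MulAut.conj (toUnit hU.1)) A : (Matrix (G3 n) (G3 n) ℂ)ˣ) : Matrix (G3 n) (G3 n) ℂ)
      = U * (A : Matrix (G3 n) (G3 n) ℂ) * star U := by
  rw [MulAut.conj_apply, Units.val_mul, Units.val_mul]
  rfl

lemma LSet_map_conj {U : Matrix (G3 n) (G3 n) ℂ} (hU : IsClifford n U)
    {S : Subgroup (Matrix (G3 n) (G3 n) ℂ)ˣ} {ψ : G3 n → ℂ} (h : StabProps n S ψ)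
    (σ : G3 n × G3 n → G3 n × G3 n) (ph : G3 n × G3 n → ZMod 3)
    (hconj : ∀ p : G3 n × G3 n,
      U * pauliXZ n p.1 p.2 * star U = om (ph p) • pauliXZ n (σ p).1 (σ p).2) :
    LSet (S.map (MulAut.conj (toUnit hU.1)).toMonoidHom) = σ '' LSet S := by
  have hval : ∀ (A : (Matrix (G3 n) (G3 n) ℂ)ˣ) (δ : ZMod 3) (p : G3 n × G3 n),
      (A : Matrix (G3 n) (G3 n) ℂ) = om δ • pauliXZ n p.1 p.2 →
      (((MulAut.conj (toUnit hU.1)).toMonoidHom A : (Matrix (G3 n) (G3 n) ℂ)ˣ)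
          : Matrix (G3 n) (G3 n) ℂ)
        = om (δ + ph p) • pauliXZ n (σ p).1 (σ p).2 := by
    intro A δ p hA
    rw [show ((MulAut.conj (toUnit hU.1)).toMonoidHom A) = (MulAut.conj (toUnit hU.1)) A
      from rfl]
    rw [conj_unit_val hU, hA, Matrix.mul_smul, Matrix.smul_mul, hconj p, smul_smul, ← om_add]
  ext q
  constructor
  · rintro ⟨δ, B, hB, hBv⟩
    rw [Subgroup.mem_map] at hB
    obtain ⟨A, hA, rfl⟩ := hB
    obtain ⟨δ₀, p, hAv, hp⟩ := mem_LSet_of_mem h hA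
    have h2 := hval A δ₀ p hAv
    rw [h2] at hBv
    obtain ⟨-, h3, h4⟩ := pauli_param_eq hBv.symm
    exact ⟨p, hp, (Prod.ext h3.symm h4.symm : σ p = q)⟩
  · rintro ⟨p, hp, rfl⟩
    obtain ⟨δ, A, hA, hAv⟩ := hp
    exact ⟨δ + ph p, (MulAut.conj (toUnit hU.1)).toMonoidHom A,
      Subgroup.mem_map.mpr ⟨A, hA, rfl⟩, hval A δ p hAv⟩

lemma LSet_sum {S : Subgroup (Matrix (G3 n) (G3 n) ℂ)ˣ} {ι : Type*} (s : Finset ι)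
    (f : ι → G3 n × G3 n) (hf : ∀ i ∈ s, f i ∈ LSet S) :
    (∑ i ∈ s, f i) ∈ LSet S := by
  classical
  induction s using Finset.induction with
  | empty => simpa using (LSet_zero : (0 : G3 n × G3 n) ∈ LSet S)
  | insert a s' hmem ih =>
      rw [Finset.sum_insert hmem]
      exact LSet_add (hf a (Finset.mem_insert_self a s'))
        (ih fun i hi => hf i (Finset.mem_insert_of_mem hi))

lemma dotp_single_left (j : Fin n) (x : G3 n) : dotp (Pi.single j 1) x = x j := by
  simp only [dotp, dotProduct]
  rw [Finset.sum_eq_single j]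
  · rw [Pi.single_eq_same, one_mul]
  · intro i _ hi
    rw [Pi.single_apply, if_neg hi, zero_mul]
  · intro h; exact absurd (Finset.mem_univ _) h

lemma pi_decomp (w : G3 n) : w = ∑ j, w j • (Pi.single j 1 : G3 n) := by
  funext i
  rw [Finset.sum_apply]
  rw [Finset.sum_eq_single i]
  · rw [Pi.smul_apply, Pi.single_eq_same, smul_eq_mul, mul_one]
  · intro j _ hj
    rw [Pi.smul_apply, Pi.single_apply, if_neg (fun h => hj h.symm), smul_zero]
  · intro h; exact absurd (Finset.mem_univ _) h

lemma transpose_mulVec_apply (M : Matrix (Fin n) (Fin n) (ZMod 3)) (w : G3 n) (j : Fin n) :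
    M.transpose.mulVec w j = dotp w (M.mulVec (Pi.single j 1)) := by
  simp only [Matrix.mulVec, dotp, dotProduct, Matrix.transpose_apply]
  apply Finset.sum_congr rfl
  intro i _
  rw [mul_comm]
  congr 1
  rw [Finset.sum_eq_single j]
  · rw [Pi.single_eq_same, mul_one]
  · intro l _ hl
    rw [Pi.single_apply, if_neg hl, mul_zero]
  · intro h; exact absurd (Finset.mem_univ _) h

end StabAux

open StabAux

set_option maxHeartbeats 1600000 in
/-- A unit vector `ψ` is an `n`-qutrit stabilizer state iff `ψ = U|0⟩^{⊗n}` for some Clifford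
unitary `U`. -/
theorem stabilizer_iff_clifford_image_of_zero (n : ℕ) (ψ : (Fin n → ZMod 3) → ℂ)
    (hψ : (∑ x, Complex.normSq (ψ x)) = 1) :
    IsStabilizerState n ψ ↔
      ∃ U : Matrix (Fin n → ZMod 3) (Fin n → ZMod 3) ℂ, IsClifford n U ∧
        ψ = U.mulVec (fun x => if x = 0 then 1 else 0) := by
  classical
  constructor
  · rintro ⟨hnorm, S, hSp⟩
    have h0 : StabProps n S ψ := hSp
    -- the X-projection of the Lagrangian
    let V : Submodule (ZMod 3) (G3 n) :=
      { carrier := Prod.fst '' LSet S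
        add_mem' := by rintro _ _ ⟨p, hp, rfl⟩ ⟨q, hq, rfl⟩; exact ⟨p + q, LSet_add hp hq, rfl⟩
        zero_mem' := ⟨0, LSet_zero, rfl⟩
        smul_mem' := by rintro c _ ⟨p, hp, rfl⟩; exact ⟨c • p, LSet_smul c hp, rfl⟩ }
    obtain ⟨T, M, N, hMN, hNM, hMT, hNV⟩ := exists_coord_frame V
    -- Stage 1 : straighten V into a coordinate subspace
    let U₁ : Matrix (G3 n) (G3 n) ℂ := permGate N M hNM hMN
    have hU₁ : IsClifford n U₁ := permGate_clifford N M hNM hMN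
    let σ₁ : G3 n × G3 n → G3 n × G3 n := fun p => (N.mulVec p.1, M.transpose.mulVec p.2)
    let S₁ := S.map (MulAut.conj (toUnit hU₁.1)).toMonoidHom
    let ψ₁ := U₁.mulVec ψ
    have h₁ : StabProps n S₁ ψ₁ := trans_lemma hU₁ h0
    have hL₁ : LSet S₁ = σ₁ '' LSet S := by
      apply LSet_map_conj hU₁ h0 σ₁ (fun _ => 0)
      intro p
      rw [om_zero, one_smul]
      exact permGate_conj N M hNM hMN p.1 p.2
    have P1a : ∀ p ∈ LSet S₁, ∀ j ∉ T, p.1 j = 0 := by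
      intro p hp j hj
      rw [hL₁] at hp
      obtain ⟨q, hq, rfl⟩ := hp
      exact hNV q.1 ⟨q, hq, rfl⟩ j hj
    have P1b : ∀ j ∈ T, ∃ u, ((Pi.single j 1 : G3 n), u) ∈ LSet S₁ := by
      intro j hj
      obtain ⟨q, hq, hq1⟩ : M.mulVec (Pi.single j 1) ∈ Prod.fst '' LSet S := hMT j hj
      refine ⟨M.transpose.mulVec q.2, ?_⟩
      rw [hL₁]
      refine ⟨q, hq, ?_⟩
      show (N.mulVec q.1, M.transpose.mulVec q.2) = _
      have hN1 : N.mulVec q.1 = Pi.single j 1 := by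
        rw [hq1, Matrix.mulVec_mulVec, hNM, Matrix.one_mulVec]
      rw [hN1]
    have P1c : ∀ u : G3 n, ((0 : G3 n), u) ∈ LSet S₁ → ∀ j ∈ T, u j = 0 := by
      intro u hu j hj
      rw [hL₁] at hu
      obtain ⟨q, hq, hqe⟩ := hu
      have hq1 : N.mulVec q.1 = 0 := congrArg Prod.fst hqe
      have hq10 : q.1 = 0 := by
        have h2 := congrArg M.mulVec hq1
        rwa [Matrix.mulVec_mulVec, hMN, Matrix.one_mulVec, Matrix.mulVec_zero] at h2
      have hq2 : u = M.transpose.mulVec q.2 := (congrArg Prod.snd hqe).symm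
      rw [hq2, transpose_mulVec_apply]
      obtain ⟨q', hq', hq'1⟩ : M.mulVec (Pi.single j 1) ∈ Prod.fst '' LSet S := hMT j hj
      rw [← hq'1]
      rw [LSet_isotropic h0 hq hq', hq10, dotp_zero_right]
    -- Stage 2 : kill the T-part of the Z-components
    let wfun : Fin n → G3 n := fun j => if h : j ∈ T then Classical.choose (P1b j h) else 0
    have hwfun : ∀ j ∈ T, ((Pi.single j 1 : G3 n), wfun j) ∈ LSet S₁ := by
      intro j hj
      show ((Pi.single j 1 : G3 n),
        (if h : j ∈ T then Classical.choose (P1b j h) else 0)) ∈ LSet S₁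
      rw [dif_pos hj]
      exact Classical.choose_spec (P1b j hj)
    let A2 : Matrix (Fin n) (Fin n) (ZMod 3) :=
      Matrix.of fun i j => if i ∈ T ∧ j ∈ T then wfun j i else 0
    have hwsymm : ∀ i ∈ T, ∀ j ∈ T, wfun j i = wfun i j := by
      intro i hi j hj
      have hiso := LSet_isotropic h₁ (hwfun i hi) (hwfun j hj)
      rw [dotp_single, dotp_single] at hiso
      exact hiso.symm
    have hA2 : A2.transpose = A2 := by
      ext i j
      show (if j ∈ T ∧ i ∈ T then wfun i j else 0) = (if i ∈ T ∧ j ∈ T then wfun j i else 0)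
      by_cases hi : i ∈ T <;> by_cases hj : j ∈ T
      · rw [if_pos ⟨hj, hi⟩, if_pos ⟨hi, hj⟩, hwsymm i hi j hj]
      · rw [if_neg (fun h => hj h.1), if_neg (fun h => hj h.2)]
      · rw [if_neg (fun h => hi h.2), if_neg (fun h => hi h.1)]
      · rw [if_neg (fun h => hi h.2), if_neg (fun h => hi h.1)]
    let U₂ : Matrix (G3 n) (G3 n) ℂ := diagGate A2
    have hU₂ : IsClifford n U₂ := diagGate_clifford A2 hA2
    let σ₂ : G3 n × G3 n → G3 n × G3 n :=
      fun p => (p.1, p.2 + A2.mulVec p.1 + A2.mulVec p.1)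
    let S₂ := S₁.map (MulAut.conj (toUnit hU₂.1)).toMonoidHom
    let ψ₂ := U₂.mulVec ψ₁
    have h₂ : StabProps n S₂ ψ₂ := trans_lemma hU₂ h₁
    have hL₂ : LSet S₂ = σ₂ '' LSet S₁ := by
      apply LSet_map_conj hU₂ h₁ σ₂ (fun p => dotp p.1 (A2.mulVec p.1))
      intro p
      exact diagGate_conj A2 hA2 p.1 p.2
    have P2 : ∀ p ∈ LSet S₂, (∀ j ∉ T, p.1 j = 0) ∧ (∀ j ∈ T, p.2 j = 0) := by
      intro p hp
      rw [hL₂] at hp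
      obtain ⟨q, hq, rfl⟩ := hp
      have hv := P1a q hq
      refine ⟨fun j hj => hv j hj, ?_⟩
      intro j hj
      have hkey : A2.mulVec q.1 j = q.2 j := by
        have hdec : (q.1, ∑ j' ∈ T, q.1 j' • wfun j') ∈ LSet S₁ := by
          have hsum := LSet_sum T (fun j' => (q.1 j') • ((Pi.single j' 1 : G3 n), wfun j'))
            (fun j' hj' => LSet_smul _ (hwfun j' hj'))
          have heq : (∑ j' ∈ T, q.1 j' • ((Pi.single j' 1 : G3 n), wfun j'))
              = (q.1, ∑ j' ∈ T, q.1 j' • wfun j') := by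
            apply Prod.ext
            · rw [Prod.fst_sum]
              show (∑ j' ∈ T, q.1 j' • (Pi.single j' 1 : G3 n)) = q.1
              funext i
              rw [Finset.sum_apply]
              by_cases hi : i ∈ T
              · rw [Finset.sum_eq_single i]
                · rw [Pi.smul_apply, Pi.single_eq_same, smul_eq_mul, mul_one]
                · intro b _ hb
                  rw [Pi.smul_apply, Pi.single_apply, if_neg (fun h => hb h.symm), smul_zero]
                · intro h; exact absurd hi h
              · rw [Finset.sum_eq_zero fun b hb => by
                  rw [Pi.smul_apply, Pi.single_apply, if_neg (fun h => hi (by rw [h]; exact hb)), smul_zero]]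
                exact (hv i hi).symm
            · rw [Prod.snd_sum]
              show (∑ c ∈ T, (q.1 c • ((Pi.single c 1 : G3 n), wfun c)).2)
                  = ∑ j' ∈ T, q.1 j' • wfun j'
              exact Finset.sum_congr rfl fun j' _ => rfl
          rwa [heq] at hsum
        have hdiff := LSet_add hq (LSet_neg hdec)
        have hdiff' : ((0 : G3 n), q.2 - ∑ j' ∈ T, q.1 j' • wfun j') ∈ LSet S₁ := by
          have heq2 : (q + -(q.1, ∑ j' ∈ T, q.1 j' • wfun j'))
              = ((0 : G3 n), q.2 - ∑ j' ∈ T, q.1 j' • wfun j') := by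
            apply Prod.ext
            · show q.1 + -(q.1) = 0
              rw [add_neg_cancel]
            · show q.2 + -(∑ j' ∈ T, q.1 j' • wfun j') = _
              rw [sub_eq_add_neg]
          rwa [heq2] at hdiff
        have hTz := P1c _ hdiff' j hj
        have hAv : A2.mulVec q.1 j = ∑ j' ∈ T, q.1 j' * wfun j' j := by
          show (∑ j', (if j ∈ T ∧ j' ∈ T then wfun j' j else 0) * q.1 j') = _
          rw [Finset.sum_congr rfl (fun j' (_ : j' ∈ Finset.univ) =>
            (show (if j ∈ T ∧ j' ∈ T then wfun j' j else 0) * q.1 j'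
                = (if j' ∈ T then q.1 j' * wfun j' j else 0) by
              by_cases hj' : j' ∈ T
              · rw [if_pos ⟨hj, hj'⟩, if_pos hj', mul_comm]
              · rw [if_neg (fun h => hj' h.2), if_neg hj', zero_mul]))]
          rw [Finset.sum_ite_mem, Finset.univ_inter]
        have hWj : (∑ j' ∈ T, q.1 j' • wfun j') j = ∑ j' ∈ T, q.1 j' * wfun j' j := by
          rw [Finset.sum_apply]
          rfl
        have hsub : q.2 j - (∑ j' ∈ T, q.1 j' • wfun j') j = 0 := hTz
        rw [hAv, ← hWj]
        linear_combination -hsub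
      show (q.2 + A2.mulVec q.1 + A2.mulVec q.1) j = 0
      rw [Pi.add_apply, Pi.add_apply, hkey]
      exact (by decide : ∀ x : ZMod 3, x + x + x = 0) (q.2 j)
    -- Stage 3 : Fourier transform on T
    let U₃ : Matrix (G3 n) (G3 n) ℂ := Fgate T
    have hU₃ : IsClifford n U₃ := Fgate_clifford T
    let σ₃ : G3 n × G3 n → G3 n × G3 n := fun p =>
      ((fun j => if j ∈ T then -p.2 j else p.1 j), fun j => if j ∈ T then p.1 j else p.2 j)
    let S₃ := S₂.map (MulAut.conj (toUnit hU₃.1)).toMonoidHom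
    let ψ₃ := U₃.mulVec ψ₂
    have h₃ : StabProps n S₃ ψ₃ := trans_lemma hU₃ h₂
    have hL₃ : LSet S₃ = σ₃ '' LSet S₂ := by
      apply LSet_map_conj hU₃ h₂ σ₃ (fun p => -∑ j ∈ T, p.2 j * p.1 j)
      intro p
      exact Fgate_conj T p.1 p.2
    have P3 : ∀ p ∈ LSet S₃, p.1 = 0 := by
      intro p hp
      rw [hL₃] at hp
      obtain ⟨q, hq, rfl⟩ := hp
      obtain ⟨hq1, hq2⟩ := P2 q hq
      funext j
      show (if j ∈ T then -q.2 j else q.1 j) = 0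
      by_cases hj : j ∈ T
      · rw [if_pos hj, hq2 j hj, neg_zero]
      · rw [if_neg hj, hq1 j hj]
    -- Stage 4 : the group is Z-type now; compute the phase functional
    have hzform : ∀ A : (Matrix (G3 n) (G3 n) ℂ)ˣ, A ∈ S₃ →
        ∃ δ w, (A : Matrix (G3 n) (G3 n) ℂ) = om δ • pauliXZ n 0 w := by
      intro A hA
      obtain ⟨δ, p, hval, hp⟩ := mem_LSet_of_mem h₃ hA
      refine ⟨δ, p.2, ?_⟩
      rw [hval, P3 p hp]
    have hfin : Finite ↥S₃ :=
      Nat.finite_of_card_ne_zero (by rw [h₃.1]; exact pow_ne_zero n (by norm_num))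
    have hspec : ∀ A : ↥S₃, ∃ q : ZMod 3 × G3 n,
        ((A : (Matrix (G3 n) (G3 n) ℂ)ˣ) : Matrix (G3 n) (G3 n) ℂ)
          = om q.1 • pauliXZ n 0 q.2 := by
      intro A
      obtain ⟨δ, w, h⟩ := hzform A A.2
      exact ⟨(δ, w), h⟩
    let Φ : ↥S₃ → ZMod 3 × G3 n := fun A => Classical.choose (hspec A)
    have hΦ : ∀ A : ↥S₃, ((A : (Matrix (G3 n) (G3 n) ℂ)ˣ) : Matrix (G3 n) (G3 n) ℂ)
        = om (Φ A).1 • pauliXZ n 0 (Φ A).2 := fun A => Classical.choose_spec (hspec A)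
    have hinj : Function.Injective (fun A : ↥S₃ => (Φ A).2) := by
      intro A B hw
      simp only at hw
      have hBv : ((B : (Matrix (G3 n) (G3 n) ℂ)ˣ) : Matrix (G3 n) (G3 n) ℂ)
          = om (Φ B).1 • pauliXZ n 0 (Φ A).2 := by rw [hw]; exact hΦ B
      have h2 := same_vw_eq h₃ A.2 B.2 (p := ((0 : G3 n), (Φ A).2)) (hΦ A) hBv
      exact Subtype.ext h2.1
    haveI : Fintype ↥S₃ := Fintype.ofFinite _
    have hbij : Function.Bijective (fun A : ↥S₃ => (Φ A).2) :=
      (Fintype.bijective_iff_injective_and_card _).mpr ⟨hinj, by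
        rw [← Nat.card_eq_fintype_card, ← Nat.card_eq_fintype_card, h₃.1, card_G3]⟩
    have hex : ∀ w : G3 n, ∃ δ : ZMod 3, ∃ A ∈ S₃,
        ((A : (Matrix (G3 n) (G3 n) ℂ)ˣ) : Matrix (G3 n) (G3 n) ℂ)
          = om δ • pauliXZ n 0 w := by
      intro w
      obtain ⟨A, hAw⟩ := hbij.2 w
      refine ⟨(Φ A).1, A, A.2, ?_⟩
      have := hΦ A
      simp only at hAw
      rwa [hAw] at this
    let ℓ : G3 n → ZMod 3 := fun w => Classical.choose (hex w)
    have hℓ : ∀ w, ∃ A ∈ S₃, ((A : (Matrix (G3 n) (G3 n) ℂ)ˣ) : Matrix (G3 n) (G3 n) ℂ)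
        = om (ℓ w) • pauliXZ n 0 w := fun w => Classical.choose_spec (hex w)
    have hℓuniq : ∀ (w : G3 n) (δ : ZMod 3) (A : (Matrix (G3 n) (G3 n) ℂ)ˣ), A ∈ S₃ →
        ((A : (Matrix (G3 n) (G3 n) ℂ)ˣ) : Matrix (G3 n) (G3 n) ℂ)
          = om δ • pauliXZ n 0 w → δ = ℓ w := by
      intro w δ A hA hval
      obtain ⟨B, hB, hBval⟩ := hℓ w
      exact (same_vw_eq h₃ hA hB (p := ((0 : G3 n), w)) hval hBval).2
    have hℓadd : ∀ w w', ℓ (w + w') = ℓ w + ℓ w' := by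
      intro w w'
      obtain ⟨A, hA, hAv⟩ := hℓ w
      obtain ⟨B, hB, hBv⟩ := hℓ w'
      have hprod : ((A * B : (Matrix (G3 n) (G3 n) ℂ)ˣ) : Matrix (G3 n) (G3 n) ℂ)
          = om (ℓ w + ℓ w') • pauliXZ n 0 (w + w') := by
        rw [Units.val_mul, hAv, hBv, smul_pauli_mul, dotp_zero_right, add_zero, zero_add]
      exact (hℓuniq _ _ _ (mul_mem hA hB) hprod).symm
    have hℓzero : ℓ 0 = 0 :=
      (hℓuniq 0 0 1 (one_mem S₃)
        (by rw [Units.val_one, om_zero, one_smul, pauli_zero_zero])).symm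
    have hℓsmul : ∀ (c : ZMod 3) (w : G3 n), ℓ (c • w) = c * ℓ w := by
      intro c w
      rcases (by decide : ∀ c : ZMod 3, c = 0 ∨ c = 1 ∨ c = 2) c with rfl | rfl | rfl
      · rw [zero_smul, hℓzero, zero_mul]
      · rw [one_smul, one_mul]
      · rw [show (2 : ZMod 3) = 1 + 1 from by decide, add_smul, one_smul, hℓadd]
        ring
    let Lhom : G3 n →+ ZMod 3 := AddMonoidHom.mk' ℓ hℓadd
    let a : G3 n := fun j => ℓ (Pi.single j 1)
    have hℓdot : ∀ w, ℓ w = dotp w a := by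
      intro w
      calc ℓ w = Lhom w := rfl
        _ = Lhom (∑ j, w j • (Pi.single j 1 : G3 n)) := by rw [← pi_decomp w]
        _ = ∑ j, Lhom (w j • (Pi.single j 1 : G3 n)) := map_sum Lhom _ _
        _ = ∑ j, w j * a j := Finset.sum_congr rfl fun j _ => hℓsmul (w j) _
        _ = dotp w a := rfl
    -- Stage 4 gate : kill phases
    let U₄ : Matrix (G3 n) (G3 n) ℂ := pauliXZ n a 0
    have hU₄ : IsClifford n U₄ := clifford_pauli a 0
    let S₄ := S₃.map (MulAut.conj (toUnit hU₄.1)).toMonoidHom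
    let ψ₄ := U₄.mulVec ψ₃
    have h₄ : StabProps n S₄ ψ₄ := trans_lemma hU₄ h₃
    have hall : ∀ w : G3 n, (pauliXZ n 0 w).mulVec ψ₄ = ψ₄ := by
      intro w
      obtain ⟨A, hA, hAv⟩ := hℓ w
      have hBmem : (MulAut.conj (toUnit hU₄.1)).toMonoidHom A ∈ S₄ :=
        Subgroup.mem_map.mpr ⟨A, hA, rfl⟩
      have hBval : (((MulAut.conj (toUnit hU₄.1)).toMonoidHom A :
            (Matrix (G3 n) (G3 n) ℂ)ˣ) : Matrix (G3 n) (G3 n) ℂ)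
          = pauliXZ n 0 w := by
        rw [show ((MulAut.conj (toUnit hU₄.1)).toMonoidHom A)
            = (MulAut.conj (toUnit hU₄.1)) A from rfl]
        rw [conj_unit_val hU₄, hAv, Matrix.mul_smul, Matrix.smul_mul]
        show om (ℓ w) • (pauliXZ n a 0 * pauliXZ n 0 w * star (pauliXZ n a 0)) = _
        rw [pauli_conj_pauli, smul_smul, ← om_add]
        have harg : ℓ w + (dotp (0 : G3 n) 0 - dotp w a) = 0 := by
          rw [dotp_zero_right, hℓdot w]
          ring
        rw [harg, om_zero, one_smul]
      have hstab := h₄.2.2.2.2 _ hBmem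
      rwa [hBval] at hstab
    have hψ₄x : ∀ x : G3 n, x ≠ 0 → ψ₄ x = 0 := by
      intro x hx
      have hjex : ∃ j, x j ≠ 0 := by
        by_contra hcon
        push_neg at hcon
        exact hx (funext hcon)
      obtain ⟨j, hj⟩ := hjex
      have hev := congrFun (hall (Pi.single j 1)) x
      have hlhs : (pauliXZ n 0 (Pi.single j 1)).mulVec ψ₄ x = om (x j) * ψ₄ x := by
        show (∑ z, pauliXZ n 0 (Pi.single j 1) x z * ψ₄ z) = _
        rw [Finset.sum_eq_single x]
        · have hd : pauliXZ n 0 (Pi.single j 1) x x = om (x j) := by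
            show (if x = x + 0 then om (dotp (Pi.single j 1) x) else 0) = _
            rw [if_pos (by rw [add_zero]), dotp_single_left]
          rw [hd]
        · intro z _ hz
          have hd : pauliXZ n 0 (Pi.single j 1) x z = 0 := by
            show (if x = z + 0 then om (dotp (Pi.single j 1) z) else 0) = 0
            rw [if_neg (by rw [add_zero]; exact fun h => hz h.symm)]
          rw [hd, zero_mul]
        · intro h; exact absurd (Finset.mem_univ _) h
      rw [hlhs] at hev
      have hne1 : om (x j) ≠ 1 := fun h => hj ((om_eq_one_iff _).mp h)
      have hz : (om (x j) - 1) * ψ₄ x = 0 := by linear_combination hev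
      rcases mul_eq_zero.mp hz with h | h
      · exact absurd (by linear_combination h) hne1
      · exact h
    have hn₄ : (∑ x, Complex.normSq (ψ₄ x)) = 1 := by
      show (∑ x, Complex.normSq ((U₄.mulVec ψ₃) x)) = 1
      rw [sum_normSq_mulVec hU₄.1]
      show (∑ x, Complex.normSq ((U₃.mulVec ψ₂) x)) = 1
      rw [sum_normSq_mulVec hU₃.1]
      show (∑ x, Complex.normSq ((U₂.mulVec ψ₁) x)) = 1
      rw [sum_normSq_mulVec hU₂.1]
      show (∑ x, Complex.normSq ((U₁.mulVec ψ) x)) = 1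
      rw [sum_normSq_mulVec hU₁.1, hnorm]
    set c : ℂ := ψ₄ 0 with hcdef
    have hψ₄e : ψ₄ = c • e0 n := by
      funext x
      by_cases hx : x = 0
      · subst hx
        rw [Pi.smul_apply, show e0 n 0 = 1 from if_pos rfl, smul_eq_mul, mul_one]
      · rw [hψ₄x x hx, Pi.smul_apply, show e0 n x = 0 from if_neg hx, smul_zero]
    have hnc : Complex.normSq c = 1 := by
      rw [hψ₄e] at hn₄
      rw [← hn₄]
      symm
      rw [Finset.sum_eq_single (0 : G3 n)]
      · rw [Pi.smul_apply, show e0 n 0 = 1 from if_pos rfl, smul_eq_mul, mul_one]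
      · intro x _ hx
        rw [Pi.smul_apply, show e0 n x = 0 from if_neg hx, smul_zero, Complex.normSq_zero]
      · intro h; exact absurd (Finset.mem_univ _) h
    have hcc : (starRingEnd ℂ) c * c = 1 := by
      rw [← Complex.normSq_eq_conj_mul_self, hnc]
      norm_num
    let W : Matrix (G3 n) (G3 n) ℂ := star U₁ * (star U₂ * (star U₃ * star U₄))
    have hW : IsClifford n W :=
      clifford_mul (clifford_star hU₁) (clifford_mul (clifford_star hU₂)
        (clifford_mul (clifford_star hU₃) (clifford_star hU₄)))
    refine ⟨c • W, clifford_smul c hcc hW, ?_⟩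
    have hrec : ∀ (U : Matrix (G3 n) (G3 n) ℂ), U ∈ unitary (Matrix (G3 n) (G3 n) ℂ) →
        ∀ f : G3 n → ℂ, (star U).mulVec (U.mulVec f) = f := by
      intro U hU f
      rw [Matrix.mulVec_mulVec, (Unitary.mem_iff.mp hU).1, Matrix.one_mulVec]
    have h4 : U₄.mulVec ψ₃ = c • e0 n := hψ₄e
    have e3 : ψ₃ = (star U₄).mulVec (c • e0 n) := by
      rw [← h4, hrec U₄ hU₄.1]
    have e2 : ψ₂ = (star U₃).mulVec ((star U₄).mulVec (c • e0 n)) := by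
      rw [← e3]
      exact (hrec U₃ hU₃.1 ψ₂).symm
    have e1 : ψ₁ = (star U₂).mulVec ((star U₃).mulVec ((star U₄).mulVec (c • e0 n))) := by
      rw [← e2]
      exact (hrec U₂ hU₂.1 ψ₁).symm
    have e00 : ψ = (star U₁).mulVec ((star U₂).mulVec ((star U₃).mulVec
        ((star U₄).mulVec (c • e0 n)))) := by
      rw [← e1]
      exact (hrec U₁ hU₁.1 ψ).symm
    show ψ = (c • W).mulVec (e0 n)
    rw [e00]
    rw [show (star U₁).mulVec ((star U₂).mulVec ((star U₃).mulVec
          ((star U₄).mulVec (c • e0 n))))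
        = c • (star U₁).mulVec ((star U₂).mulVec ((star U₃).mulVec
          ((star U₄).mulVec (e0 n)))) from by
      rw [Matrix.mulVec_smul, Matrix.mulVec_smul, Matrix.mulVec_smul, Matrix.mulVec_smul]]
    rw [Matrix.smul_mulVec]
    congr 1
    rw [Matrix.mulVec_mulVec, Matrix.mulVec_mulVec, Matrix.mulVec_mulVec]
    congr 1
    simp only [Matrix.mul_assoc]
    rfl
  · rintro ⟨U, hU, hval⟩
    refine ⟨hψ, Subgroup.map (MulAut.conj (toUnit hU.1)).toMonoidHom (zSubgroup n), ?_⟩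
    have h := trans_lemma hU (zgroup_props (n := n))
    have he : (fun x : G3 n => if x = 0 then (1 : ℂ) else 0) = e0 n := rfl
    rw [he] at hval
    rw [← hval] at h
    exact h
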